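/- arXiv:1302.6403 — 7 statements merged into one kernel-verified Lean document; each statement's English description precedes it below -/
import Mathlib

section
/- Let g : [0,1] → ℝ be concave with g(0) = 0, and let η(x) = -x log x for x > 0 with η(0) = 0. Then for every integer k > 1, the limsup as x → 0⁺ of g(x)/η(x) equals the limsup as n → ∞ of g(k^{-n})/η(k^{-n}). -/
/-- The Shannon entropy function. -/
noncomputable def eta (x : ℝ) : ℝ := -x * Real.log x

/-!
Concavity and `g 0 = 0` make the slope `g x / x` antitone, and `g x / eta x = (g x / x) / (-log x)`.
If `g ≤ 0` on `(0, 1)`, the slope stays in `[g 1, 0]` and both limsups are `0`. Otherwise the slope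
is eventually positive, and for `k⁻⁽ⁿ⁺¹⁾ ≤ x ≤ k⁻ⁿ` comparing `x` with the left endpoint gives
`g x / eta x ≤ (1 + 1/n) · g y / eta y` with `y = k⁻⁽ⁿ⁺¹⁾`; the factor tends to `1`.
-/

open Filter Set Topology

theorem ConcaveOn.div_le_div_of_le {s : Set ℝ} {g : ℝ → ℝ} (hg : ConcaveOn ℝ s g) (h0s : 0 ∈ s)
    (h0 : g 0 = 0) {x y : ℝ} (hy : 0 < y) (hys : y ∈ s) (hxs : x ∈ s) (hyx : y ≤ x) :
    g x / x ≤ g y / y := by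
  simpa [slope_def_field, h0] using
    hg.antitoneOn_slope_gt h0s ⟨hys, hy⟩ ⟨hxs, hy.trans_le hyx⟩ hyx

theorem div_eta_eq (c x : ℝ) : c / eta x = c / x / -Real.log x := by
  rw [eta, div_div, neg_mul, mul_neg]

theorem div_eta_le_log_div_log_mul {a b x y : ℝ} (hx : 0 < x) (hx1 : x < 1) (hy : 0 < y)
    (hy1 : y < 1) (hab : a / x ≤ b / y) :
    a / eta x ≤ Real.log y / Real.log x * (b / eta y) := by
  have hlogx : Real.log x < 0 := Real.log_neg hx hx1
  have hlogy : Real.log y < 0 := Real.log_neg hy hy1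
  rw [div_eta_eq a x, div_eta_eq b y]
  calc a / x / -Real.log x ≤ b / y / -Real.log x :=
        div_le_div_of_nonneg_right hab (neg_nonneg.2 hlogx.le)
    _ = Real.log y / Real.log x * (b / y / -Real.log y) := by
        field_simp [hlogx.ne, hlogy.ne]

noncomputable def natLogInv (k : ℕ) (x : ℝ) : ℕ := Nat.log k ⌊x⁻¹⌋₊

theorem inv_pow_succ_natLogInv_lt {k : ℕ} (hk : 1 < k) {x : ℝ} (hx : 0 < x) :
    ((k : ℝ) ^ (natLogInv k x + 1))⁻¹ < x := by
  have hfloor : ⌊x⁻¹⌋₊ + 1 ≤ k ^ (natLogInv k x + 1) := Nat.lt_pow_succ_log_self hk _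
  have hk0 : (0 : ℝ) < k := by exact_mod_cast (zero_lt_one.trans hk)
  rw [inv_lt_comm₀ (by positivity) hx]
  calc x⁻¹ < ⌊x⁻¹⌋₊ + 1 := Nat.lt_floor_add_one _
    _ ≤ (k : ℝ) ^ (natLogInv k x + 1) := by exact_mod_cast hfloor

theorem le_inv_pow_natLogInv {k : ℕ} (hk : 1 < k) {x : ℝ} (hx : 0 < x) (hx1 : x ≤ 1) :
    x ≤ ((k : ℝ) ^ natLogInv k x)⁻¹ := by
  have hk0 : (0 : ℝ) < k := by exact_mod_cast (zero_lt_one.trans hk)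
  have hfloor : ⌊x⁻¹⌋₊ ≠ 0 := (Nat.floor_pos.2 (one_le_inv₀ hx |>.2 hx1)).ne'
  rw [le_inv_comm₀ hx (by positivity)]
  calc (k : ℝ) ^ natLogInv k x ≤ ⌊x⁻¹⌋₊ := by exact_mod_cast Nat.pow_log_le_self k hfloor
    _ ≤ x⁻¹ := Nat.floor_le (inv_nonneg.2 hx.le)

theorem tendsto_natLogInv {k : ℕ} (hk : 1 < k) : Tendsto (natLogInv k) (𝓝[>] 0) atTop := by
  have hlog : Tendsto (Nat.log k) atTop atTop :=
    tendsto_atTop_atTop.2 fun n => ⟨k ^ n, fun _ hm => Nat.le_log_of_pow_le hk hm⟩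
  exact hlog.comp (tendsto_nat_floor_atTop.comp tendsto_inv_nhdsGT_zero)

theorem tendsto_inv_pow_nhdsWithin_Ioo {k : ℕ} (hk : 1 < k) :
    Tendsto (fun n : ℕ => ((k : ℝ) ^ n)⁻¹) atTop (𝓝[Ioo 0 1] 0) := by
  have hk' : (1 : ℝ) < k := by exact_mod_cast hk
  refine tendsto_nhdsWithin_iff.2 ⟨?_, ?_⟩
  · exact tendsto_inv_atTop_zero.comp (tendsto_pow_atTop_atTop_of_one_lt hk')
  · filter_upwards [eventually_ge_atTop 1] with n hn
    exact ⟨by positivity, inv_lt_one_of_one_lt₀ (one_lt_pow₀ hk' (by omega))⟩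

theorem eta_nonneg {x : ℝ} (hx : 0 ≤ x) (hx1 : x ≤ 1) : 0 ≤ eta x :=
  Real.negMulLog_nonneg hx hx1

theorem div_eta_le_one_add_inv_mul {g : ℝ → ℝ} (hg : ConcaveOn ℝ (Icc 0 1) g) (h0 : g 0 = 0)
    {k n : ℕ} (hk : 1 < k) (hn : 1 ≤ n) {x : ℝ} (hx1 : x < 1)
    (hlo : ((k : ℝ) ^ (n + 1))⁻¹ ≤ x) (hhi : x ≤ ((k : ℝ) ^ n)⁻¹)
    (hgy : 0 ≤ g ((k : ℝ) ^ (n + 1))⁻¹) :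
    g x / eta x ≤ (1 + (n : ℝ)⁻¹) * (g ((k : ℝ) ^ (n + 1))⁻¹ / eta ((k : ℝ) ^ (n + 1))⁻¹) := by
  set y := ((k : ℝ) ^ (n + 1))⁻¹
  have hy : 0 < y := by positivity
  have hx : 0 < x := hy.trans_le hlo
  have hslope := hg.div_le_div_of_le (left_mem_Icc.2 zero_le_one) h0 hy ⟨hy.le, hlo.trans hx1.le⟩
    ⟨hx.le, hx1.le⟩ hlo
  refine (div_eta_le_log_div_log_mul hx hx1 hy (hlo.trans_lt hx1) hslope).trans
    (mul_le_mul_of_nonneg_right ?_ (div_nonneg hgy (eta_nonneg hy.le (hlo.trans hx1.le))))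
  have hlogy : Real.log y = -((n + 1) * Real.log k) := by
    simp [y, Real.log_inv, Real.log_pow]
  have hlogx : n * Real.log k ≤ -Real.log x := by
    have := Real.log_le_log hx hhi
    rw [Real.log_inv, Real.log_pow] at this
    linarith
  have hlogk : 0 < Real.log k := Real.log_pos (by exact_mod_cast hk)
  have hnlogk : 0 < n * Real.log k := mul_pos (by exact_mod_cast hn) hlogk
  calc Real.log y / Real.log x = (n + 1) * Real.log k / -Real.log x := by
        rw [hlogy, neg_div, ← div_neg]
    _ ≤ (n + 1) * Real.log k / (n * Real.log k) :=
        div_le_div_of_nonneg_left (by positivity) hnlogk hlogx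
    _ = 1 + (n : ℝ)⁻¹ := by field_simp [hlogk.ne']

theorem tendsto_div_eta_zero_of_nonpos {g : ℝ → ℝ} (hg : ConcaveOn ℝ (Icc 0 1) g)
    (h0 : g 0 = 0) (hneg : ∀ x ∈ Ioo (0 : ℝ) 1, g x ≤ 0) :
    Tendsto (fun x => g x / eta x) (𝓝[Ioo 0 1] 0) (𝓝 0) := by
  have hlog : Tendsto (fun x => -Real.log x) (𝓝[Ioo 0 1] 0) atTop :=
    tendsto_neg_atBot_atTop.comp
      (Real.tendsto_log_nhdsGT_zero.mono_left (nhdsWithin_mono _ Ioo_subset_Ioi_self))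
  refine tendsto_of_tendsto_of_tendsto_of_le_of_le' (hlog.const_div_atTop (g 1)) tendsto_const_nhds
    ?_ ?_
  all_goals
    filter_upwards [self_mem_nhdsWithin] with x hx
    have hlogx : 0 < -Real.log x := neg_pos.2 (Real.log_neg hx.1 hx.2)
    rw [div_eta_eq]
  · have hslope := hg.div_le_div_of_le (left_mem_Icc.2 zero_le_one) h0 hx.1 ⟨hx.1.le, hx.2.le⟩
      (right_mem_Icc.2 zero_le_one) hx.2.le
    rw [div_one] at hslope
    exact div_le_div_of_nonneg_right hslope hlogx.le
  · exact div_nonpos_of_nonpos_of_nonneg (div_nonpos_of_nonpos_of_nonneg (hneg x hx) hx.1.le)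
      hlogx.le

theorem limsup_div_eta_le_limsup_inv_pow {g : ℝ → ℝ} (hg : ConcaveOn ℝ (Icc 0 1) g)
    (h0 : g 0 = 0) {k : ℕ} (hk : 1 < k) {x₀ : ℝ} (hx₀ : x₀ ∈ Ioo 0 1)
    (hpos : 0 < g x₀) :
    limsup (fun x : ℝ => ((g x / eta x : ℝ) : EReal)) (𝓝[Ioo 0 1] 0) ≤
      limsup (fun n : ℕ => ((g ((k : ℝ) ^ n)⁻¹ / eta ((k : ℝ) ^ n)⁻¹ : ℝ) : EReal)) atTop := by
  set a : ℕ → EReal := fun n => ((g ((k : ℝ) ^ n)⁻¹ / eta ((k : ℝ) ^ n)⁻¹ : ℝ) : EReal)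
  set t : ℕ → EReal := fun n => ((1 + (n : ℝ)⁻¹ : ℝ) : EReal)
  have hgpos : ∀ y ∈ Ioo 0 x₀, 0 < g y := fun y hy => by
    have hslope := hg.div_le_div_of_le (left_mem_Icc.2 zero_le_one) h0 hy.1
      ⟨hy.1.le, hy.2.le.trans hx₀.2.le⟩ ⟨hx₀.1.le, hx₀.2.le⟩ hy.2.le
    exact (div_pos_iff_of_pos_right hy.1).1 ((div_pos hpos hx₀.1).trans_le hslope)
  have hsmall : ∀ᶠ x in 𝓝[Ioo 0 1] 0, x ∈ Ioo 0 x₀ := by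
    filter_upwards [self_mem_nhdsWithin, mem_nhdsWithin_of_mem_nhds (Iio_mem_nhds hx₀.1)]
      with x hx hxx₀
    exact ⟨hx.1, hxx₀⟩
  have hN : Tendsto (natLogInv k) (𝓝[Ioo 0 1] 0) atTop :=
    (tendsto_natLogInv hk).mono_left (nhdsWithin_mono _ Ioo_subset_Ioi_self)
  have hbound : ∀ᶠ x in 𝓝[Ioo 0 1] 0,
      ((g x / eta x : ℝ) : EReal) ≤ t (natLogInv k x) * a (natLogInv k x + 1) := by
    filter_upwards [self_mem_nhdsWithin, hN.eventually_ge_atTop 1, hsmall] with x hx hn hxx₀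
    have hlo := inv_pow_succ_natLogInv_lt hk hx.1
    rw [← EReal.coe_mul, EReal.coe_le_coe_iff]
    exact div_eta_le_one_add_inv_mul hg h0 hk hn hx.2 hlo.le (le_inv_pow_natLogInv hk hx.1 hx.2.le)
      (hgpos _ ⟨by positivity, hlo.trans hxx₀.2⟩).le
  have ha : ∀ᶠ n in atTop, 0 ≤ a (n + 1) := by
    filter_upwards [(tendsto_add_atTop_nat 1).eventually
      ((tendsto_inv_pow_nhdsWithin_Ioo hk).eventually hsmall)] with n hn
    exact EReal.coe_nonneg.2 (div_nonneg (hgpos _ hn).le (eta_nonneg hn.1.le (hn.2.trans hx₀.2).le))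
  have ht : limsup t atTop = 1 := by
    refine Tendsto.limsup_eq (EReal.tendsto_coe.2 ?_)
    simpa using tendsto_inv_atTop_nhds_zero_nat.const_add (1 : ℝ)
  calc limsup (fun x : ℝ => ((g x / eta x : ℝ) : EReal)) (𝓝[Ioo 0 1] 0)
      ≤ limsup (fun x => t (natLogInv k x) * a (natLogInv k x + 1)) (𝓝[Ioo 0 1] 0) :=
        limsup_le_limsup hbound
    _ ≤ limsup (fun n => t n * a (n + 1)) atTop :=
        hN.limsup_comp_le_limsup (u := fun n => t n * a (n + 1))
    _ ≤ limsup t atTop * limsup (fun n => a (n + 1)) atTop :=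
        EReal.limsup_mul_le (Frequently.of_forall fun n => EReal.coe_nonneg.2 (by positivity)) ha
          (.inl (by simp [ht])) (.inl (by simp [ht]; decide))
    _ = limsup a atTop := by rw [ht, one_mul, limsup_nat_add]

theorem limsup_ratio_along_powers_general (g : ℝ → ℝ)
    (hconc : ConcaveOn ℝ (Set.Icc 0 1) g) (h0 : g 0 = 0)
    (k : ℕ) (hk : 1 < k) :
    Filter.limsup (fun x : ℝ => ((g x / eta x : ℝ) : EReal))
        (nhdsWithin 0 (Set.Ioo 0 1))
      = Filter.limsup
          (fun n : ℕ => ((g (((k:ℝ)^n)⁻¹) / eta (((k:ℝ)^n)⁻¹) : ℝ) : EReal))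
          Filter.atTop := by
  have hseq := tendsto_inv_pow_nhdsWithin_Ioo hk
  by_cases hsign : ∃ x₀ ∈ Ioo (0 : ℝ) 1, 0 < g x₀
  · obtain ⟨x₀, hx₀, hpos⟩ := hsign
    exact le_antisymm (limsup_div_eta_le_limsup_inv_pow hconc h0 hk hx₀ hpos)
      (hseq.limsup_comp_le_limsup (u := fun x : ℝ => ((g x / eta x : ℝ) : EReal)))
  · have hneg : ∀ x ∈ Ioo (0 : ℝ) 1, g x ≤ 0 := fun x hx => not_lt.1 fun h => hsign ⟨x, hx, h⟩
    have : (𝓝[Ioo (0 : ℝ) 1] 0).NeBot := left_nhdsWithin_Ioo_neBot zero_lt_one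
    have h := EReal.tendsto_coe.2 (tendsto_div_eta_zero_of_nonpos hconc h0 hneg)
    exact h.limsup_eq.trans (h.comp hseq).limsup_eq.symm

theorem limsup_ratio_along_powers (g : ℝ → ℝ)
    (hconc : ConcaveOn ℝ (Set.Icc 0 1) g) (h0 : g 0 = 0)
    (hlim : Filter.Tendsto g (nhdsWithin 0 (Set.Ioi 0)) (nhds 0))
    (k : ℕ) (hk : 1 < k) :
    Filter.limsup (fun x : ℝ => ((g x / eta x : ℝ) : EReal))
        (nhdsWithin 0 (Set.Ioo 0 1))
      = Filter.limsup
          (fun n : ℕ => ((g (((k:ℝ)^n)⁻¹) / eta (((k:ℝ)^n)⁻¹) : ℝ) : EReal))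
          Filter.atTop :=
  limsup_ratio_along_powers_general g hconc h0 k hk
end

section
/- Let g₁, g₂ : [0,1] → ℝ be concave, vanishing at 0 with limit 0 at 0⁺, with g₂ positive on (0,1), and suppose limsup_{x→0⁺} g₁(x)/g₂(x) < ∞. Let (𝒫ₙ) be a sequence of finite partitions such that Σ_{A∈𝒫ₙ} g₂(μ(A)) → ∞ and limsup_{n} (1/n) Σ_{A∈𝒫ₙ} g₂(μ(A)) = h₂ < ∞. Then limsup_n (1/n) Σ_{A∈𝒫ₙ} g₁(μ(A)) ≤ (limsup_{x→0⁺} g₁(x)/g₂(x)) · h₂. -/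
open MeasureTheory Filter Set

private lemma chord_low (g : ℝ → ℝ) (hc : ConcaveOn ℝ (Set.Icc 0 1) g) (h0 : g 0 = 0)
    (x : ℝ) (hx : x ∈ Set.Icc (0:ℝ) 1) : x * g 1 ≤ g x := by
  have key : x • g 1 + (1-x) • g 0 ≤ g (x • 1 + (1-x) • 0) :=
    hc.2 ⟨zero_le_one, le_refl 1⟩ ⟨le_refl 0, zero_le_one⟩ hx.1 (by linarith [hx.2]) (by ring)
  simp only [smul_eq_mul, mul_one, mul_zero, add_zero, h0] at key
  linarith

private lemma conc_upper (g : ℝ → ℝ) (hc : ConcaveOn ℝ (Set.Icc 0 1) g) (h0 : g 0 = 0)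
    (δ x : ℝ) (hδ : 0 < δ) (hx1 : δ ≤ x) (hx2 : x ≤ 1) : g x ≤ (1/δ) * |g δ| := by
  have hx0 : 0 < x := lt_of_lt_of_le hδ hx1
  have hd1 : δ/x ≤ 1 := (div_le_one hx0).mpr hx1
  have key : (δ/x) • g x + (1-δ/x) • g 0 ≤ g ((δ/x) • x + (1-δ/x) • 0) :=
    hc.2 ⟨le_of_lt hx0, hx2⟩ ⟨le_refl 0, zero_le_one⟩ (by positivity) (by linarith) (by ring)
  simp only [smul_eq_mul, mul_zero, add_zero, h0] at key
  rw [div_mul_cancel₀ _ (ne_of_gt hx0), div_mul_eq_mul_div, div_le_iff₀ hx0] at key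
  have h2 : g x ≤ (x/δ) * g δ := by
    rw [div_mul_eq_mul_div, le_div_iff₀ hδ]; linarith
  rcases le_or_gt 0 (g δ) with h | h
  · calc g x ≤ (x/δ) * g δ := h2
      _ ≤ (1/δ) * g δ := by gcongr
      _ = (1/δ) * |g δ| := by rw [abs_of_nonneg h]
  · calc g x ≤ (x/δ) * g δ := h2
      _ ≤ 0 := mul_nonpos_of_nonneg_of_nonpos (by positivity) (le_of_lt h)
      _ ≤ (1/δ) * |g δ| := by positivity

private lemma sum_toReal_le_one {X : Type*} [MeasurableSpace X] (μ : Measure X)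
    [IsProbabilityMeasure μ] (s : Finset (Set X)) (hm : ∀ A ∈ s, MeasurableSet A)
    (hd : (s : Set (Set X)).PairwiseDisjoint id) :
    ∑ A ∈ s, (μ A).toReal ≤ 1 := by
  have h1 : ∑ A ∈ s, μ A = μ (⋃ A ∈ s, A) := (measure_biUnion_finset hd hm).symm
  have h2 : μ (⋃ A ∈ s, A) ≤ 1 := prob_le_one
  have h3 : ∑ A ∈ s, (μ A).toReal = (∑ A ∈ s, μ A).toReal := by
    rw [ENNReal.toReal_sum (fun A _ => measure_ne_top μ A)]
  rw [h3, h1]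
  exact ENNReal.toReal_le_of_le_ofReal zero_le_one (by simpa using h2)

private lemma toReal_le_one {X : Type*} [MeasurableSpace X] (μ : Measure X)
    [IsProbabilityMeasure μ] (A : Set X) : (μ A).toReal ≤ 1 :=
  ENNReal.toReal_le_of_le_ofReal zero_le_one (by simpa using prob_le_one (μ := μ) (s := A))

private lemma extract_delta (g₁ g₂ : ℝ → ℝ)
    (hpos : ∀ x ∈ Set.Ioo (0:ℝ) 1, 0 < g₂ x) (C' : ℝ)
    (h : ∀ᶠ x in nhdsWithin 0 (Set.Ioo 0 1), ((g₁ x / g₂ x : ℝ) : EReal) < (C' : EReal)) :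
    ∃ δ, 0 < δ ∧ δ < 1 ∧ ∀ x ∈ Set.Ioo (0:ℝ) δ, g₁ x ≤ C' * g₂ x := by
  rw [eventually_nhdsWithin_iff, Metric.eventually_nhds_iff] at h
  obtain ⟨δ₀, hδ₀, h⟩ := h
  refine ⟨min δ₀ (1/2), by positivity, lt_of_le_of_lt (min_le_right _ _) (by norm_num), ?_⟩
  intro x hx
  have hx1 : x ∈ Set.Ioo (0:ℝ) 1 := ⟨hx.1, lt_of_lt_of_le hx.2 ((min_le_right _ _).trans (by norm_num))⟩
  have hd : dist x 0 < δ₀ := by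
    rw [Real.dist_eq, sub_zero, abs_of_pos hx.1]
    exact lt_of_lt_of_le hx.2 (min_le_left _ _)
  have := h hd hx1
  rw [EReal.coe_lt_coe_iff] at this
  have hg2 := hpos x hx1
  exact le_of_lt ((div_lt_iff₀ hg2).mp this)

private lemma key_est {X : Type*} [MeasurableSpace X] (μ : Measure X)
    [IsProbabilityMeasure μ] (g₁ g₂ : ℝ → ℝ)
    (hc1 : ConcaveOn ℝ (Set.Icc 0 1) g₁) (h01 : g₁ 0 = 0) (h02 : g₂ 0 = 0)
    (hpos : ∀ x ∈ Set.Ioo (0:ℝ) 1, 0 < g₂ x)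
    (s : Finset (Set X)) (hm : ∀ A ∈ s, MeasurableSet A)
    (hd : (s : Set (Set X)).PairwiseDisjoint id)
    (c δ : ℝ) (hc : 0 ≤ c) (hδ0 : 0 < δ) (hδ1 : δ < 1)
    (hsmall : ∀ x ∈ Set.Ioo (0:ℝ) δ, g₁ x ≤ c * g₂ x) :
    ∑ A ∈ s, g₁ (μ A).toReal ≤
      c * ∑ A ∈ s, g₂ (μ A).toReal + (1/δ) * ((1/δ) * |g₁ δ|) + c * ((1/δ) * |g₂ 1|) := by
  classical
  set B := s.filter (fun A => δ ≤ (μ A).toReal) with hB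
  have hcard : (B.card : ℝ) * δ ≤ 1 := by
    calc (B.card : ℝ) * δ = ∑ _A ∈ B, δ := by rw [Finset.sum_const, nsmul_eq_mul]
      _ ≤ ∑ A ∈ B, (μ A).toReal :=
        Finset.sum_le_sum (fun A hA => (Finset.mem_filter.mp hA).2)
      _ ≤ ∑ A ∈ s, (μ A).toReal :=
        Finset.sum_le_sum_of_subset_of_nonneg (Finset.filter_subset _ _)
          (fun _ _ _ => ENNReal.toReal_nonneg)
      _ ≤ 1 := sum_toReal_le_one μ s hm hd
  have hcard' : (B.card : ℝ) ≤ 1/δ := by rw [le_div_iff₀ hδ0]; exact hcard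
  have hbig1 : ∑ A ∈ B, g₁ (μ A).toReal ≤ (B.card : ℝ) * ((1/δ) * |g₁ δ|) := by
    rw [← nsmul_eq_mul]
    refine Finset.sum_le_card_nsmul _ _ _ (fun A hA => ?_)
    exact conc_upper g₁ hc1 h01 δ _ hδ0 (Finset.mem_filter.mp hA).2 (toReal_le_one μ A)
  have hbig2 : (B.card : ℝ) * (-(|g₂ 1|)) ≤ ∑ A ∈ B, g₂ (μ A).toReal := by
    rw [← nsmul_eq_mul]
    refine Finset.card_nsmul_le_sum _ _ _ (fun A hA => ?_)
    have h1 : δ ≤ (μ A).toReal := (Finset.mem_filter.mp hA).2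
    rcases lt_or_eq_of_le (toReal_le_one μ A) with h2 | h2
    · exact le_trans (neg_nonpos_of_nonneg (abs_nonneg _))
        (le_of_lt (hpos _ ⟨lt_of_lt_of_le hδ0 h1, h2⟩))
    · rw [h2]; exact neg_abs_le _
  have hsplit1 := Finset.sum_filter_add_sum_filter_not s (fun A => δ ≤ (μ A).toReal)
    (fun A => g₁ (μ A).toReal)
  have hsplit2 := Finset.sum_filter_add_sum_filter_not s (fun A => δ ≤ (μ A).toReal)
    (fun A => g₂ (μ A).toReal)
  have hsm : ∑ A ∈ s.filter (fun A => ¬ δ ≤ (μ A).toReal), g₁ (μ A).toReal ≤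
      c * ∑ A ∈ s.filter (fun A => ¬ δ ≤ (μ A).toReal), g₂ (μ A).toReal := by
    rw [Finset.mul_sum]
    refine Finset.sum_le_sum (fun A hA => ?_)
    have hlt : (μ A).toReal < δ := lt_of_not_ge (Finset.mem_filter.mp hA).2
    rcases eq_or_lt_of_le (ENNReal.toReal_nonneg : (0:ℝ) ≤ (μ A).toReal) with h0 | h0
    · rw [← h0, h01, h02, mul_zero]
    · exact hsmall _ ⟨h0, hlt⟩
  have hA : (B.card : ℝ) * ((1/δ) * |g₁ δ|) ≤ (1/δ) * ((1/δ) * |g₁ δ|) :=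
    mul_le_mul_of_nonneg_right hcard' (by positivity)
  have hBb : c * ((B.card : ℝ) * |g₂ 1|) ≤ c * ((1/δ) * |g₂ 1|) :=
    mul_le_mul_of_nonneg_left (mul_le_mul_of_nonneg_right hcard' (abs_nonneg _)) hc
  have hsm2 : c * ∑ A ∈ s.filter (fun A => ¬ δ ≤ (μ A).toReal), g₂ (μ A).toReal ≤
      c * (∑ A ∈ s, g₂ (μ A).toReal + (B.card : ℝ) * |g₂ 1|) := by
    refine mul_le_mul_of_nonneg_left ?_ hc
    have : (B.card : ℝ) * (-(|g₂ 1|)) = -((B.card : ℝ) * |g₂ 1|) := by ring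
    rw [this] at hbig2
    linarith [hsplit2, hbig2]
  have := mul_add c (∑ A ∈ s, g₂ (μ A).toReal) ((B.card : ℝ) * |g₂ 1|)
  linarith [hsplit1, hbig1, hsm, hsm2, hA, hBb]

theorem limsup_g_entropy_le (X : Type*) [MeasurableSpace X]
    (μ : Measure X) [IsProbabilityMeasure μ]
    (g₁ g₂ : ℝ → ℝ)
    (hc1 : ConcaveOn ℝ (Set.Icc 0 1) g₁) (h01 : g₁ 0 = 0)
    (hl1 : Filter.Tendsto g₁ (nhdsWithin 0 (Set.Ioi 0)) (nhds 0))
    (hc2 : ConcaveOn ℝ (Set.Icc 0 1) g₂) (h02 : g₂ 0 = 0)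
    (hl2 : Filter.Tendsto g₂ (nhdsWithin 0 (Set.Ioi 0)) (nhds 0))
    (hpos : ∀ x ∈ Set.Ioo (0:ℝ) 1, 0 < g₂ x)
    (P : ℕ → Finset (Set X))
    (hmeas : ∀ n, ∀ A ∈ P n, MeasurableSet A)
    (hdisj : ∀ n, (P n : Set (Set X)).PairwiseDisjoint id)
    (hcover : ∀ n, ⋃₀ (P n : Set (Set X)) = Set.univ)
    (C h₂ : ℝ)
    (hC : Filter.limsup (fun x : ℝ => ((g₁ x / g₂ x : ℝ) : EReal))
        (nhdsWithin 0 (Set.Ioo 0 1)) = (C : EReal))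
    (hH2inf : Filter.Tendsto (fun n => ∑ A ∈ P n, g₂ (μ A).toReal)
        Filter.atTop Filter.atTop)
    (hh2 : Filter.limsup
        (fun n : ℕ => (((1 / (n:ℝ)) * ∑ A ∈ P n, g₂ (μ A).toReal : ℝ) : EReal))
        Filter.atTop = (h₂ : EReal)) :
    Filter.limsup
        (fun n : ℕ => (((1 / (n:ℝ)) * ∑ A ∈ P n, g₁ (μ A).toReal : ℝ) : EReal))
        Filter.atTop ≤ ((C * h₂ : ℝ) : EReal) := by
  classical
  set S₁ : ℕ → ℝ := fun n => ∑ A ∈ P n, g₁ (μ A).toReal with hS₁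
  set S₂ : ℕ → ℝ := fun n => ∑ A ∈ P n, g₂ (μ A).toReal with hS₂
  -- Step D : C ≥ 0
  have hC0 : 0 ≤ C := by
    by_contra hCneg
    push_neg at hCneg
    have hev : ∀ᶠ x in nhdsWithin 0 (Set.Ioo 0 1),
        ((g₁ x / g₂ x : ℝ) : EReal) < ((C/2 : ℝ) : EReal) := by
      refine Filter.eventually_lt_of_limsup_lt ?_
      rw [hC]; exact_mod_cast (by linarith : C < C/2)
    obtain ⟨δ, hδ0, hδ1, hsmall⟩ := extract_delta g₁ g₂ hpos (C/2) hev
    set K : ℝ := 2 * g₁ 1 / C with hK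
    have hKb : ∀ x ∈ Set.Ioo (0:ℝ) δ, g₂ x ≤ K * x := by
      intro x hx
      have h1 := hsmall x hx
      have h2 := chord_low g₁ hc1 h01 x ⟨le_of_lt hx.1, le_of_lt (lt_trans hx.2 hδ1)⟩
      -- g₁ x ≤ (C/2) * g₂ x, x * g₁ 1 ≤ g₁ x, C < 0
      -- so (C/2) g₂ x ≥ x g₁ 1, divide by C/2 < 0 :
      have hC2 : C/2 < 0 := by linarith
      rw [hK, div_mul_eq_mul_div, le_div_iff_of_neg (by linarith : C < 0)]
      nlinarith
    have hKpos : 0 < K := by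
      have := hpos (δ/2) ⟨by positivity, by linarith⟩
      have h2 := hKb (δ/2) ⟨by positivity, by linarith⟩
      nlinarith
    have hbd : ∀ n, S₂ n ≤ K + (1/δ) * ((1/δ) * |g₂ δ|) := by
      intro n
      have hsplit := Finset.sum_filter_add_sum_filter_not (P n)
        (fun A => δ ≤ (μ A).toReal) (fun A => g₂ (μ A).toReal)
      set B := (P n).filter (fun A => δ ≤ (μ A).toReal) with hBdef
      have hcard : (B.card : ℝ) ≤ 1/δ := by
        rw [le_div_iff₀ hδ0]
        calc (B.card : ℝ) * δ = ∑ _A ∈ B, δ := by rw [Finset.sum_const, nsmul_eq_mul]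
          _ ≤ ∑ A ∈ B, (μ A).toReal :=
            Finset.sum_le_sum (fun A hA => (Finset.mem_filter.mp hA).2)
          _ ≤ ∑ A ∈ P n, (μ A).toReal :=
            Finset.sum_le_sum_of_subset_of_nonneg (Finset.filter_subset _ _)
              (fun _ _ _ => ENNReal.toReal_nonneg)
          _ ≤ 1 := sum_toReal_le_one μ (P n) (hmeas n) (hdisj n)
      have hbig : ∑ A ∈ B, g₂ (μ A).toReal ≤ (1/δ) * ((1/δ) * |g₂ δ|) := by
        calc ∑ A ∈ B, g₂ (μ A).toReal ≤ (B.card : ℝ) * ((1/δ) * |g₂ δ|) := by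
              rw [← nsmul_eq_mul]
              exact Finset.sum_le_card_nsmul _ _ _ (fun A hA =>
                conc_upper g₂ hc2 h02 δ _ hδ0 (Finset.mem_filter.mp hA).2 (toReal_le_one μ A))
          _ ≤ (1/δ) * ((1/δ) * |g₂ δ|) := mul_le_mul_of_nonneg_right hcard (by positivity)
      have hsm : ∑ A ∈ (P n).filter (fun A => ¬ δ ≤ (μ A).toReal), g₂ (μ A).toReal ≤ K := by
        calc ∑ A ∈ (P n).filter (fun A => ¬ δ ≤ (μ A).toReal), g₂ (μ A).toReal
            ≤ ∑ A ∈ (P n).filter (fun A => ¬ δ ≤ (μ A).toReal), K * (μ A).toReal := by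
              refine Finset.sum_le_sum (fun A hA => ?_)
              have hlt : (μ A).toReal < δ := lt_of_not_ge (Finset.mem_filter.mp hA).2
              rcases eq_or_lt_of_le (ENNReal.toReal_nonneg : (0:ℝ) ≤ (μ A).toReal) with h0 | h0
              · rw [← h0, h02, mul_zero]
              · exact hKb _ ⟨h0, hlt⟩
          _ = K * ∑ A ∈ (P n).filter (fun A => ¬ δ ≤ (μ A).toReal), (μ A).toReal := by
              rw [Finset.mul_sum]
          _ ≤ K * 1 := by
              refine mul_le_mul_of_nonneg_left ?_ (le_of_lt hKpos)
              calc ∑ A ∈ (P n).filter (fun A => ¬ δ ≤ (μ A).toReal), (μ A).toReal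
                  ≤ ∑ A ∈ P n, (μ A).toReal :=
                    Finset.sum_le_sum_of_subset_of_nonneg (Finset.filter_subset _ _)
                      (fun _ _ _ => ENNReal.toReal_nonneg)
                _ ≤ 1 := sum_toReal_le_one μ (P n) (hmeas n) (hdisj n)
          _ = K := mul_one K
      have : S₂ n = ∑ A ∈ B, g₂ (μ A).toReal +
          ∑ A ∈ (P n).filter (fun A => ¬ δ ≤ (μ A).toReal), g₂ (μ A).toReal := by
        rw [hS₂]; exact hsplit.symm
      linarith
    obtain ⟨n, hn⟩ := (hH2inf.eventually_ge_atTop (K + (1/δ) * ((1/δ) * |g₂ δ|) + 1)).exists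
    have := hbd n
    simp only [hS₂] at this hn
    linarith
  -- Step E : h₂ ≥ 0
  have hh20 : 0 ≤ h₂ := by
    have hev : ∀ᶠ n : ℕ in atTop,
        ((0:ℝ) : EReal) ≤ (((1 / (n:ℝ)) * S₂ n : ℝ) : EReal) := by
      filter_upwards [hH2inf.eventually_ge_atTop 0, eventually_ge_atTop 1] with n h1 h2
      rw [EReal.coe_le_coe_iff]
      have : (0:ℝ) < n := by exact_mod_cast h2
      positivity
    have h1 : ((0:ℝ) : EReal) ≤ Filter.liminf
        (fun n : ℕ => (((1 / (n:ℝ)) * S₂ n : ℝ) : EReal)) atTop :=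
      Filter.le_liminf_of_le (by isBoundedDefault) hev
    have h2 : Filter.liminf (fun n : ℕ => (((1 / (n:ℝ)) * S₂ n : ℝ) : EReal)) atTop ≤
        Filter.limsup (fun n : ℕ => (((1 / (n:ℝ)) * S₂ n : ℝ) : EReal)) atTop :=
      liminf_le_limsup
    rw [hh2] at h2
    exact_mod_cast h1.trans h2
  -- Main argument
  by_contra hcon
  push_neg at hcon
  obtain ⟨r, hr1, hr2⟩ := EReal.exists_between_coe_real hcon
  rw [EReal.coe_lt_coe_iff] at hr1
  set η : ℝ := r - C * h₂ with hη
  have hηpos : 0 < η := by rw [hη]; linarith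
  set t : ℝ := min (1/2) (η / (2 * (C + h₂ + 1))) with ht
  have htpos : 0 < t := by
    apply lt_min (by norm_num)
    have : 0 < C + h₂ + 1 := by linarith
    positivity
  have ht1 : t ≤ 1 := (min_le_left _ _).trans (by norm_num)
  have ht2 : t * (C + h₂ + 1) ≤ η / 2 := by
    have h1 : t ≤ η / (2 * (C + h₂ + 1)) := min_le_right _ _
    have h2 : 0 < C + h₂ + 1 := by linarith
    rw [le_div_iff₀ (by positivity)] at h1
    linarith
  have hev : ∀ᶠ x in nhdsWithin 0 (Set.Ioo 0 1),
      ((g₁ x / g₂ x : ℝ) : EReal) < ((C + t : ℝ) : EReal) := by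
    refine Filter.eventually_lt_of_limsup_lt ?_
    rw [hC]; exact_mod_cast (by linarith : C < C + t)
  obtain ⟨δ, hδ0, hδ1, hsmall⟩ := extract_delta g₁ g₂ hpos (C + t) hev
  set c : ℝ := C + t with hc
  have hcnn : 0 ≤ c := by rw [hc]; linarith
  set K : ℝ := (1/δ) * ((1/δ) * |g₁ δ|) + c * ((1/δ) * |g₂ 1|) with hKdef
  have hkey : ∀ n, S₁ n ≤ c * S₂ n + K := by
    intro n
    have := key_est μ g₁ g₂ hc1 h01 h02 hpos (P n) (hmeas n) (hdisj n) c δ hcnn hδ0 hδ1 hsmall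
    rw [hKdef]; rw [hS₁, hS₂]; linarith
  -- eventual bounds
  have hevS2 : ∀ᶠ n : ℕ in atTop, (1 / (n:ℝ)) * S₂ n < h₂ + t := by
    have hlt : Filter.limsup (fun n : ℕ => (((1 / (n:ℝ)) * S₂ n : ℝ) : EReal)) atTop <
        ((h₂ + t : ℝ) : EReal) := by
      rw [hh2]; exact_mod_cast (by linarith : h₂ < h₂ + t)
    filter_upwards [Filter.eventually_lt_of_limsup_lt hlt] with n hn
    exact_mod_cast hn
  have hKn : ∀ᶠ n : ℕ in atTop, K * (1 / (n:ℝ)) ≤ η / 4 := by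
    have htend : Filter.Tendsto (fun n : ℕ => K * (1 / (n:ℝ))) atTop (nhds (K * 0)) :=
      tendsto_one_div_atTop_nhds_zero_nat.const_mul K
    rw [mul_zero] at htend
    exact htend.eventually_le_const (by positivity)
  have hfin : ∀ᶠ n : ℕ in atTop,
      (((1 / (n:ℝ)) * S₁ n : ℝ) : EReal) ≤ ((C * h₂ + 3 * η / 4 : ℝ) : EReal) := by
    filter_upwards [hevS2, hKn, eventually_ge_atTop 1] with n h1 h2 h3
    rw [EReal.coe_le_coe_iff]
    have hnpos : (0:ℝ) < n := by exact_mod_cast h3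
    have hinv : 0 ≤ 1 / (n:ℝ) := by positivity
    have step1 : (1 / (n:ℝ)) * S₁ n ≤ c * ((1 / (n:ℝ)) * S₂ n) + K * (1 / (n:ℝ)) := by
      have := mul_le_mul_of_nonneg_left (hkey n) hinv
      calc (1 / (n:ℝ)) * S₁ n ≤ (1 / (n:ℝ)) * (c * S₂ n + K) := this
        _ = c * ((1 / (n:ℝ)) * S₂ n) + K * (1 / (n:ℝ)) := by ring
    have step2 : c * ((1 / (n:ℝ)) * S₂ n) ≤ c * (h₂ + t) :=
      mul_le_mul_of_nonneg_left (le_of_lt h1) hcnn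
    have step3 : c * (h₂ + t) ≤ C * h₂ + η / 2 := by
      rw [hc]
      have : (C + t) * (h₂ + t) = C * h₂ + t * (C + h₂ + t) := by ring
      rw [this]
      have : t * (C + h₂ + t) ≤ t * (C + h₂ + 1) :=
        mul_le_mul_of_nonneg_left (by linarith) (le_of_lt htpos)
      linarith [ht2]
    linarith
  have hlim : Filter.limsup
      (fun n : ℕ => (((1 / (n:ℝ)) * S₁ n : ℝ) : EReal)) atTop ≤
      ((C * h₂ + 3 * η / 4 : ℝ) : EReal) :=
    Filter.limsup_le_of_le (by isBoundedDefault) hfin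
  have : ((r:ℝ) : EReal) < ((C * h₂ + 3 * η / 4 : ℝ) : EReal) := lt_of_lt_of_le hr2 hlim
  rw [EReal.coe_lt_coe_iff] at this
  rw [hη] at this
  linarith
end

section
/- Let g₁, g₂ : [0,1] → ℝ be concave, vanishing at 0 with limit 0 at 0⁺, g₂ positive on (0,1). If the limit lim_{x→0⁺} g₁(x)/g₂(x) exists and is finite, and (𝒫ₙ) is a sequence of finite partitions with H(g₂,𝒫ₙ) → ∞, then limsup_n (1/n) H(g₁,𝒫ₙ) = (lim_{x→0⁺} g₁(x)/g₂(x)) · limsup_n (1/n) H(g₂,𝒫ₙ), whenever the latter limsup is finite. -/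
/-!
Near `0`, `g₁ = (L + o(1)) g₂`, so atoms of measure below some `δ` contribute
`|g₁ - L g₂| ≤ ε g₂`, while atoms of measure at least `δ` are at most `1 / δ` in number and both
functions are bounded on `[δ, 1]` (concavity with `g(0) = 0` makes `g(x) / x` antitone). Hence
`|H(g₁, 𝒫) - L H(g₂, 𝒫)| ≤ ε H(g₂, 𝒫) + K_ε` uniformly in `𝒫`; as `H(g₂, 𝒫ₙ) / n` is eventually
bounded, `H(g₁, 𝒫ₙ) / n - L H(g₂, 𝒫ₙ) / n → 0`. Passing this through the `limsup` needs `L ≥ 0`: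
were `g₂(x) ≤ C x` we would get `H(g₂, 𝒫) ≤ C`, so `g₂(x) / x → ∞` as `x → 0⁺`, while
`g₁(x) / g₂(x) ≥ g₁(1) · x / g₂(x) → 0`.
-/

open MeasureTheory Filter Set Topology

section Concave

variable {g : ℝ → ℝ}

theorem ConcaveOn.mul_le_mul_of_map_zero {s : Set ℝ} (hc : ConcaveOn ℝ s g) (hs : 0 ∈ s)
    (h0 : g 0 = 0) {x y : ℝ} (hx : 0 < x) (hxy : x ≤ y) (hy : y ∈ s) : x * g y ≤ y * g x := by
  have hy0 : 0 < y := hx.trans_le hxy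
  have hconc := hc.2 hs hy (sub_nonneg.2 ((div_le_one hy0).2 hxy)) (div_nonneg hx.le hy0.le)
    (sub_add_cancel 1 (x / y))
  simp only [smul_eq_mul, h0, mul_zero, zero_add, div_mul_cancel₀ x hy0.ne'] at hconc
  calc x * g y = y * (x / y * g y) := by field_simp
    _ ≤ y * g x := mul_le_mul_of_nonneg_left hconc hy0.le

theorem ConcaveOn.abs_le_of_mem_Icc (hc : ConcaveOn ℝ (Icc 0 1) g) (h0 : g 0 = 0) {δ t : ℝ}
    (hδ : 0 < δ) (ht : t ∈ Icc δ 1) : |g t| ≤ |g δ| / δ + |g 1| := by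
  have hzero : (0 : ℝ) ∈ Icc 0 1 := left_mem_Icc.2 zero_le_one
  have ht0 : 0 < t := hδ.trans_le ht.1
  have hupper : δ * g t ≤ t * g δ := hc.mul_le_mul_of_map_zero hzero h0 hδ ht.1 ⟨ht0.le, ht.2⟩
  have hlower : t * g 1 ≤ 1 * g t :=
    hc.mul_le_mul_of_map_zero hzero h0 ht0 ht.2 (right_mem_Icc.2 zero_le_one)
  have hgδ : t * g δ ≤ |g δ| := by
    nlinarith [le_abs_self (g δ), abs_nonneg (g δ), ht.2]
  have hg1 : -|g 1| ≤ t * g 1 := by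
    nlinarith [neg_abs_le (g 1), abs_nonneg (g 1), ht.2]
  have hδg : g t ≤ |g δ| / δ := by rw [le_div_iff₀ hδ]; linarith
  rw [abs_le]
  constructor <;> linarith [div_nonneg (abs_nonneg (g δ)) hδ.le, abs_nonneg (g 1)]

theorem ConcaveOn.tendsto_div_atTop (hc : ConcaveOn ℝ (Icc 0 1) g) (h0 : g 0 = 0)
    (hg : ∀ c, ∃ x ∈ Ioo (0 : ℝ) 1, c * x < g x) :
    Tendsto (fun x => g x / x) (𝓝[>] 0) atTop := by
  refine tendsto_atTop.2 fun c => ?_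
  obtain ⟨x₀, hx₀, hcx₀⟩ := hg c
  filter_upwards [Ioo_mem_nhdsGT hx₀.1] with x hx
  have hslope : x * g x₀ ≤ x₀ * g x :=
    hc.mul_le_mul_of_map_zero (left_mem_Icc.2 zero_le_one) h0 hx.1 hx.2.le (Ioo_subset_Icc_self hx₀)
  rw [le_div_iff₀ hx.1]
  nlinarith [hx.1, hx₀.1]

end Concave

section Partition

variable {X : Type*} [MeasurableSpace X] {μ : Measure X}

noncomputable def partitionEntropy (μ : Measure X) (g : ℝ → ℝ) (Q : Finset (Set X)) : ℝ :=
  ∑ A ∈ Q, g (μ A).toReal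

variable [IsZeroOrProbabilityMeasure μ] {Q : Finset (Set X)}

theorem toReal_measure_mem_Icc (A : Set X) : (μ A).toReal ∈ Icc (0 : ℝ) 1 :=
  ⟨measureReal_nonneg, measureReal_le_one⟩

theorem sum_toReal_measure_le_one (hmeas : ∀ A ∈ Q, MeasurableSet A)
    (hdisj : (Q : Set (Set X)).PairwiseDisjoint id) : ∑ A ∈ Q, (μ A).toReal ≤ 1 := by
  calc ∑ A ∈ Q, (μ A).toReal = μ.real (⋃ A ∈ Q, id A) :=
        (measureReal_biUnion_finset hdisj hmeas).symm
    _ ≤ 1 := measureReal_le_one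

theorem card_filter_le_toReal_measure_ge (hmeas : ∀ A ∈ Q, MeasurableSet A)
    (hdisj : (Q : Set (Set X)).PairwiseDisjoint id) {δ : ℝ} (hδ : 0 < δ) :
    ((Q.filter fun A => δ ≤ (μ A).toReal).card : ℝ) ≤ 1 / δ := by
  rw [le_div_iff₀ hδ]
  calc ((Q.filter fun A => δ ≤ (μ A).toReal).card : ℝ) * δ
      ≤ ∑ A ∈ Q.filter fun A => δ ≤ (μ A).toReal, (μ A).toReal := by
        rw [← nsmul_eq_mul]
        exact Finset.card_nsmul_le_sum _ _ _ fun A hA => (Finset.mem_filter.1 hA).2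
    _ ≤ 1 := sum_toReal_measure_le_one (fun A hA => hmeas A (Finset.mem_of_mem_filter A hA))
        (hdisj.subset (Finset.coe_subset.2 (Finset.filter_subset _ Q)))

theorem partitionEntropy_le_of_le_mul {g : ℝ → ℝ} {C : ℝ} (hC : 0 ≤ C)
    (hg : ∀ x ∈ Icc (0 : ℝ) 1, g x ≤ C * x) (hmeas : ∀ A ∈ Q, MeasurableSet A)
    (hdisj : (Q : Set (Set X)).PairwiseDisjoint id) : partitionEntropy μ g Q ≤ C :=
  calc partitionEntropy μ g Q ≤ ∑ A ∈ Q, C * (μ A).toReal :=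
        Finset.sum_le_sum fun A _ => hg _ (toReal_measure_mem_Icc A)
    _ = C * ∑ A ∈ Q, (μ A).toReal := (Finset.mul_sum _ _ _).symm
    _ ≤ C := mul_le_of_le_one_right hC (sum_toReal_measure_le_one hmeas hdisj)

theorem partitionEntropy_le_add_of_le {f h : ℝ → ℝ} {δ C : ℝ} (hδ : 0 < δ) (hC : 0 ≤ C)
    (hfh : ∀ x ∈ Icc (0 : ℝ) 1, f x ≤ h x + if δ ≤ x then C else 0)
    (hmeas : ∀ A ∈ Q, MeasurableSet A) (hdisj : (Q : Set (Set X)).PairwiseDisjoint id) :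
    partitionEntropy μ f Q ≤ partitionEntropy μ h Q + C / δ :=
  calc partitionEntropy μ f Q
      ≤ ∑ A ∈ Q, (h (μ A).toReal + if δ ≤ (μ A).toReal then C else 0) :=
        Finset.sum_le_sum fun A _ => hfh _ (toReal_measure_mem_Icc A)
    _ = partitionEntropy μ h Q + (Q.filter fun A => δ ≤ (μ A).toReal).card * C := by
        rw [Finset.sum_add_distrib, ← Finset.sum_filter, Finset.sum_const, nsmul_eq_mul]
        rfl
    _ ≤ partitionEntropy μ h Q + 1 / δ * C := by
        gcongr
        exact card_filter_le_toReal_measure_ge hmeas hdisj hδ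
    _ = partitionEntropy μ h Q + C / δ := by ring

end Partition

section Comparison

variable {X : Type*} [MeasurableSpace X] {μ : Measure X} [IsZeroOrProbabilityMeasure μ]
  {g g₁ g₂ : ℝ → ℝ}

theorem exists_lt_mul_of_tendsto_partitionEntropy (h0 : g 0 = 0) {P : ℕ → Finset (Set X)}
    (hmeas : ∀ n, ∀ A ∈ P n, MeasurableSet A) (hdisj : ∀ n, (P n : Set (Set X)).PairwiseDisjoint id)
    (hH : Tendsto (fun n => partitionEntropy μ g (P n)) atTop atTop) (c : ℝ) :
    ∃ x ∈ Ioo (0 : ℝ) 1, c * x < g x := by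
  by_contra! hle
  have hlin : ∀ x ∈ Icc (0 : ℝ) 1, g x ≤ (|c| + |g 1|) * x := by
    rintro x ⟨hx0, hx1⟩
    rcases hx0.eq_or_lt with rfl | hx0
    · simp [h0]
    rcases hx1.eq_or_lt with rfl | hx1
    · linarith [le_abs_self (g 1), abs_nonneg c]
    nlinarith [hle x ⟨hx0, hx1⟩, le_abs_self c, abs_nonneg (g 1)]
  obtain ⟨n, hn⟩ := (hH.eventually_gt_atTop (|c| + |g 1|)).exists
  exact hn.not_ge (partitionEntropy_le_of_le_mul (by positivity) hlin (hmeas n) (hdisj n))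

theorem nonneg_of_tendsto_div_of_concaveOn (hc₁ : ConcaveOn ℝ (Icc 0 1) g₁) (h₁0 : g₁ 0 = 0)
    (hpos : ∀ x ∈ Ioo (0 : ℝ) 1, 0 < g₂ x) (h₂ : Tendsto (fun x => g₂ x / x) (𝓝[>] 0) atTop)
    {L : ℝ} (hL : Tendsto (fun x => g₁ x / g₂ x) (𝓝[>] 0) (𝓝 L)) : 0 ≤ L := by
  have hinv : Tendsto (fun x => g₁ 1 * (x / g₂ x)) (𝓝[>] 0) (𝓝 0) := by
    simpa [inv_div] using (tendsto_inv_atTop_zero.comp h₂).const_mul (g₁ 1)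
  refine le_of_tendsto_of_tendsto hinv hL ?_
  filter_upwards [Ioo_mem_nhdsGT one_pos] with x hx
  have hslope := hc₁.mul_le_mul_of_map_zero (left_mem_Icc.2 zero_le_one) h₁0 hx.1 hx.2.le
    (right_mem_Icc.2 zero_le_one)
  rw [mul_div_assoc', div_le_div_iff_of_pos_right (hpos x hx)]
  linarith

theorem exists_abs_sub_mul_le (hc₁ : ConcaveOn ℝ (Icc 0 1) g₁) (h₁0 : g₁ 0 = 0)
    (hc₂ : ConcaveOn ℝ (Icc 0 1) g₂) (h₂0 : g₂ 0 = 0) (hpos : ∀ x ∈ Ioo (0 : ℝ) 1, 0 < g₂ x)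
    {L : ℝ} (hL : Tendsto (fun x => g₁ x / g₂ x) (𝓝[>] 0) (𝓝 L)) {ε : ℝ} (hε : 0 < ε) :
    ∃ δ > 0, ∃ C ≥ 0, ∀ x ∈ Icc (0 : ℝ) 1,
      |g₁ x - L * g₂ x| ≤ ε * g₂ x + if δ ≤ x then C else 0 := by
  obtain ⟨δ, hδ, hsmall⟩ := (nhdsGT_basis (0 : ℝ)).eventually_iff.1
    ((hL.eventually (Metric.ball_mem_nhds L hε)).and (Ioo_mem_nhdsGT one_pos))
  set M₁ := |g₁ δ| / δ + |g₁ 1|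
  set M₂ := |g₂ δ| / δ + |g₂ 1|
  refine ⟨δ, hδ, M₁ + |L| * M₂ + ε * M₂, by positivity, fun x hx => ?_⟩
  split_ifs with hδx
  · have hx' : x ∈ Icc δ 1 := ⟨hδx, hx.2⟩
    have hb₁ := hc₁.abs_le_of_mem_Icc h₁0 hδ hx'
    have hb₂ := hc₂.abs_le_of_mem_Icc h₂0 hδ hx'
    have hεg₂ : -(ε * M₂) ≤ ε * g₂ x := by
      nlinarith [neg_abs_le (g₂ x)]
    calc |g₁ x - L * g₂ x| ≤ |g₁ x| + |L| * |g₂ x| := by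
          rw [← abs_mul]; exact abs_sub _ _
      _ ≤ M₁ + |L| * M₂ := by gcongr
      _ ≤ ε * g₂ x + (M₁ + |L| * M₂ + ε * M₂) := by linarith
  rcases hx.1.eq_or_lt with rfl | hx0
  · simp [h₁0, h₂0]
  obtain ⟨hratio, hx1⟩ := hsmall ⟨hx0, not_le.1 hδx⟩
  have hg₂x := hpos x hx1
  rw [Real.dist_eq] at hratio
  calc |g₁ x - L * g₂ x| = |(g₁ x / g₂ x - L) * g₂ x| := by
        rw [sub_mul, div_mul_cancel₀ _ hg₂x.ne']
    _ = |g₁ x / g₂ x - L| * g₂ x := by rw [abs_mul, abs_of_pos hg₂x]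
    _ ≤ ε * g₂ x := by gcongr
    _ = ε * g₂ x + 0 := (add_zero _).symm

theorem abs_partitionEntropy_sub_le (hc₁ : ConcaveOn ℝ (Icc 0 1) g₁) (h₁0 : g₁ 0 = 0)
    (hc₂ : ConcaveOn ℝ (Icc 0 1) g₂) (h₂0 : g₂ 0 = 0) (hpos : ∀ x ∈ Ioo (0 : ℝ) 1, 0 < g₂ x)
    {L : ℝ} (hL : Tendsto (fun x => g₁ x / g₂ x) (𝓝[>] 0) (𝓝 L)) {ε : ℝ} (hε : 0 < ε) :
    ∃ K, ∀ Q : Finset (Set X), (∀ A ∈ Q, MeasurableSet A) →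
      (Q : Set (Set X)).PairwiseDisjoint id →
      |partitionEntropy μ g₁ Q - L * partitionEntropy μ g₂ Q|
        ≤ ε * partitionEntropy μ g₂ Q + K := by
  obtain ⟨δ, hδ, C, hC, hpt⟩ := exists_abs_sub_mul_le hc₁ h₁0 hc₂ h₂0 hpos hL hε
  refine ⟨C / δ, fun Q hmeas hdisj => ?_⟩
  calc |partitionEntropy μ g₁ Q - L * partitionEntropy μ g₂ Q|
      = |∑ A ∈ Q, (g₁ (μ A).toReal - L * g₂ (μ A).toReal)| := by
        rw [partitionEntropy, partitionEntropy, Finset.mul_sum, Finset.sum_sub_distrib]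
    _ ≤ partitionEntropy μ (fun x => |g₁ x - L * g₂ x|) Q := Finset.abs_sum_le_sum_abs _ _
    _ ≤ partitionEntropy μ (fun x => ε * g₂ x) Q + C / δ :=
        partitionEntropy_le_add_of_le hδ hC hpt hmeas hdisj
    _ = ε * partitionEntropy μ g₂ Q + C / δ := by rw [partitionEntropy, ← Finset.mul_sum]; rfl

end Comparison

theorem tendsto_div_sub_mul_div_of_abs_le {u v : ℕ → ℝ} {L C : ℝ}
    (hv : ∀ᶠ n : ℕ in atTop, 1 / (n : ℝ) * v n ≤ C)
    (huv : ∀ ε > 0, ∃ K, ∀ n, |u n - L * v n| ≤ ε * v n + K) :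
    Tendsto (fun n : ℕ => 1 / (n : ℝ) * u n - L * (1 / (n : ℝ) * v n)) atTop (𝓝 0) := by
  refine Metric.tendsto_nhds.2 fun η hη => ?_
  set ε := η / (2 * (|C| + 1))
  have hε : 0 < ε := by positivity
  have hεC : ε * C < η / 2 := by
    have : ε * (|C| + 1) = η / 2 := by
      rw [div_mul_eq_mul_div, mul_div_mul_right _ _ (by positivity)]
    nlinarith [le_abs_self C]
  obtain ⟨K, hK⟩ := huv ε hε
  filter_upwards [hv, (tendsto_const_div_atTop_nhds_zero_nat K).eventually
    (gt_mem_nhds (half_pos hη))] with n hvn hKn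
  have hn : 0 ≤ 1 / (n : ℝ) := by positivity
  rw [Real.dist_eq, sub_zero]
  calc |1 / (n : ℝ) * u n - L * (1 / (n : ℝ) * v n)| = 1 / (n : ℝ) * |u n - L * v n| := by
        rw [← abs_of_nonneg hn, ← abs_mul, abs_of_nonneg hn]; ring_nf
    _ ≤ 1 / (n : ℝ) * (ε * v n + K) := by gcongr; exact hK n
    _ = ε * (1 / (n : ℝ) * v n) + K / n := by ring
    _ ≤ ε * C + K / n := by gcongr
    _ < η := by linarith

theorem limsup_coe_eq_mul_of_tendsto_sub_mul {α : Type*} {f : Filter α} [f.NeBot] {a b : α → ℝ}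
    {L h : ℝ} (hL : 0 ≤ L) (hb : limsup (fun n => (b n : EReal)) f = h)
    (hab : Tendsto (fun n => a n - L * b n) f (𝓝 0)) :
    limsup (fun n => (a n : EReal)) f = ((L * h : ℝ) : EReal) := by
  set r : α → EReal := fun n => ((a n - L * b n : ℝ) : EReal)
  have hr : Tendsto r f (𝓝 0) := (continuous_coe_real_ereal.tendsto 0).comp hab
  have hsplit : (fun n => (a n : EReal)) = (fun n => (L : EReal) * b n) + r := by
    ext n; simp only [Pi.add_apply, r, ← EReal.coe_mul, ← EReal.coe_add]; ring_nf
  have hLb : limsup (fun n => (L : EReal) * b n) f = ((L * h : ℝ) : EReal) := by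
    rw [EReal.limsup_const_mul_of_nonneg_of_ne_top (EReal.coe_nonneg.2 hL) (EReal.coe_ne_top L),
      hb, EReal.coe_mul]
  rw [hsplit]
  apply le_antisymm
  · calc limsup ((fun n => (L : EReal) * b n) + r) f
        ≤ limsup (fun n => (L : EReal) * b n) f + limsup r f :=
          EReal.limsup_add_le (Or.inr (by simp [hr.limsup_eq])) (Or.inr (by simp [hr.limsup_eq]))
      _ = ((L * h : ℝ) : EReal) := by rw [hLb, hr.limsup_eq, add_zero]
  · calc ((L * h : ℝ) : EReal) = limsup (fun n => (L : EReal) * b n) f + liminf r f := by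
          rw [hLb, hr.liminf_eq, add_zero]
      _ ≤ limsup ((fun n => (L : EReal) * b n) + r) f := EReal.le_limsup_add

theorem limsup_g_entropy_eq_general (X : Type*) [MeasurableSpace X]
    (μ : Measure X) [IsProbabilityMeasure μ]
    (g₁ g₂ : ℝ → ℝ)
    (hc1 : ConcaveOn ℝ (Set.Icc 0 1) g₁) (h01 : g₁ 0 = 0)
    (hc2 : ConcaveOn ℝ (Set.Icc 0 1) g₂) (h02 : g₂ 0 = 0)
    (hpos : ∀ x ∈ Set.Ioo (0:ℝ) 1, 0 < g₂ x)
    (P : ℕ → Finset (Set X))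
    (hmeas : ∀ n, ∀ A ∈ P n, MeasurableSet A)
    (hdisj : ∀ n, (P n : Set (Set X)).PairwiseDisjoint id)
    (L h₂ : ℝ)
    (hL : Filter.Tendsto (fun x : ℝ => g₁ x / g₂ x)
        (nhdsWithin 0 (Set.Ioo 0 1)) (nhds L))
    (hH2inf : Filter.Tendsto (fun n => ∑ A ∈ P n, g₂ (μ A).toReal)
        Filter.atTop Filter.atTop)
    (hh2 : Filter.limsup
        (fun n : ℕ => (((1 / (n:ℝ)) * ∑ A ∈ P n, g₂ (μ A).toReal : ℝ) : EReal))
        Filter.atTop = (h₂ : EReal)) :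
    Filter.limsup
        (fun n : ℕ => (((1 / (n:ℝ)) * ∑ A ∈ P n, g₁ (μ A).toReal : ℝ) : EReal))
        Filter.atTop = ((L * h₂ : ℝ) : EReal) := by
  rw [nhdsWithin_Ioo_eq_nhdsGT one_pos] at hL
  have hg₂ : Tendsto (fun x => g₂ x / x) (𝓝[>] 0) atTop :=
    hc2.tendsto_div_atTop h02 (exists_lt_mul_of_tendsto_partitionEntropy h02 hmeas hdisj hH2inf)
  have hL0 : 0 ≤ L := nonneg_of_tendsto_div_of_concaveOn hc1 h01 hpos hg₂ hL
  change limsup (fun n : ℕ => ((1 / (n : ℝ) * partitionEntropy μ g₂ (P n) : ℝ) : EReal)) atTop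
    = h₂ at hh2
  have hbdd : ∀ᶠ n : ℕ in atTop, 1 / (n : ℝ) * partitionEntropy μ g₂ (P n) ≤ h₂ + 1 := by
    have hlt : limsup (fun n : ℕ => ((1 / (n : ℝ) * partitionEntropy μ g₂ (P n) : ℝ) : EReal)) atTop
        < ((h₂ + 1 : ℝ) : EReal) := by
      rw [hh2]; exact_mod_cast lt_add_one h₂
    filter_upwards [eventually_lt_of_limsup_lt hlt] with n hn using (EReal.coe_lt_coe_iff.1 hn).le
  refine limsup_coe_eq_mul_of_tendsto_sub_mul hL0 hh2 (tendsto_div_sub_mul_div_of_abs_le hbdd ?_)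
  intro ε hε
  obtain ⟨K, hK⟩ := abs_partitionEntropy_sub_le (μ := μ) hc1 h01 hc2 h02 hpos hL hε
  exact ⟨K, fun n => hK (P n) (hmeas n) (hdisj n)⟩

theorem limsup_g_entropy_eq (X : Type*) [MeasurableSpace X]
    (μ : Measure X) [IsProbabilityMeasure μ]
    (g₁ g₂ : ℝ → ℝ)
    (hc1 : ConcaveOn ℝ (Set.Icc 0 1) g₁) (h01 : g₁ 0 = 0)
    (hl1 : Filter.Tendsto g₁ (nhdsWithin 0 (Set.Ioi 0)) (nhds 0))
    (hc2 : ConcaveOn ℝ (Set.Icc 0 1) g₂) (h02 : g₂ 0 = 0)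
    (hl2 : Filter.Tendsto g₂ (nhdsWithin 0 (Set.Ioi 0)) (nhds 0))
    (hpos : ∀ x ∈ Set.Ioo (0:ℝ) 1, 0 < g₂ x)
    (P : ℕ → Finset (Set X))
    (hmeas : ∀ n, ∀ A ∈ P n, MeasurableSet A)
    (hdisj : ∀ n, (P n : Set (Set X)).PairwiseDisjoint id)
    (hcover : ∀ n, ⋃₀ (P n : Set (Set X)) = Set.univ)
    (L h₂ : ℝ)
    (hL : Filter.Tendsto (fun x : ℝ => g₁ x / g₂ x)
        (nhdsWithin 0 (Set.Ioo 0 1)) (nhds L))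
    (hH2inf : Filter.Tendsto (fun n => ∑ A ∈ P n, g₂ (μ A).toReal)
        Filter.atTop Filter.atTop)
    (hh2 : Filter.limsup
        (fun n : ℕ => (((1 / (n:ℝ)) * ∑ A ∈ P n, g₂ (μ A).toReal : ℝ) : EReal))
        Filter.atTop = (h₂ : EReal)) :
    Filter.limsup
        (fun n : ℕ => (((1 / (n:ℝ)) * ∑ A ∈ P n, g₁ (μ A).toReal : ℝ) : EReal))
        Filter.atTop = ((L * h₂ : ℝ) : EReal) :=
  limsup_g_entropy_eq_general X μ g₁ g₂ hc1 h01 hc2 h02 hpos P hmeas hdisj L h₂ hL hH2inf hh2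
end

section
/- Let g : [0,1] → ℝ be concave with g(0)=0 and η(x) = -x log x. Let k ≥ 2 be an integer. Then liminf_{n→∞} (1/n) kⁿ g(k^{-n}) = c·log k where c := liminf_{x→0⁺} g(x)/η(x), if c is finite, and equals +∞ if c = ∞. -/
/-!
Substituting `x = exp (-s)` turns `g x / η x` into `φ s / s` with `φ s = g (exp (-s)) / exp (-s)`,
and concavity with `g 0 = 0` makes `φ` nondecreasing on `[0, ∞)`. The `n`-th term of the sequence is
`P · φ (n P) / (n P)` with `P = log k`, so it suffices that for a nondecreasing `φ` the lower limit
of `φ s / s` along `s → ∞` is already attained along the progression `n P`: every `s` lies within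
`P` of some `n P ≤ s`, and `φ s ≥ φ (n P)`.
-/

open Filter Set Real Topology

theorem ConcaveOn.antitoneOn_div_self {s : Set ℝ} {g : ℝ → ℝ} (hconc : ConcaveOn ℝ s g)
    (hs : 0 ∈ s) (h0 : g 0 = 0) : AntitoneOn (fun x => g x / x) (s ∩ Ioi 0) := by
  intro x hx y hy hxy
  have := hconc.neg.secant_mono hs hx.1 hy.1 hx.2.ne' hy.2.ne' hxy
  simpa [h0, neg_div] using this

theorem ConcaveOn.monotoneOn_div_exp_neg {g : ℝ → ℝ} (hconc : ConcaveOn ℝ (Icc 0 1) g)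
    (h0 : g 0 = 0) : MonotoneOn (fun s => g (exp (-s)) / exp (-s)) (Ici 0) := by
  have hmem : ∀ s ∈ Ici (0 : ℝ), exp (-s) ∈ Icc 0 1 ∩ Ioi 0 := fun s hs =>
    ⟨⟨(exp_pos _).le, exp_le_one_iff.mpr (neg_nonpos.mpr hs)⟩, exp_pos _⟩
  exact fun s hs s' hs' hss' => hconc.antitoneOn_div_self (left_mem_Icc.mpr zero_le_one) h0
    (hmem s' hs') (hmem s hs) (exp_le_exp.mpr (neg_le_neg hss'))

theorem MonotoneOn.liminf_div_self_nat_mul {φ : ℝ → ℝ} (hφ : MonotoneOn φ (Ici 0)) {P : ℝ}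
    (hP : 0 < P) :
    liminf (fun n : ℕ => ((φ (n * P) / (n * P) : ℝ) : EReal)) atTop
      = liminf (fun s => ((φ s / s : ℝ) : EReal)) atTop := by
  refine le_antisymm (le_of_forall_lt_imp_le_of_dense fun a ha => ?_)
    (tendsto_natCast_atTop_atTop.atTop_mul_const hP).liminf_le_liminf_comp
  obtain ⟨t', hat', ht'⟩ := EReal.exists_between_coe_real ha
  obtain ⟨t, ht't, ht⟩ := EReal.exists_between_coe_real ht'
  have ht't : t' < t := EReal.coe_lt_coe_iff.mp ht't
  refine hat'.le.trans (le_liminf_of_le (by isBoundedDefault) ?_)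
  have hfloor : Tendsto (fun s => ⌊s / P⌋₊) atTop atTop :=
    tendsto_nat_floor_atTop.comp (tendsto_id.atTop_div_const hP)
  have hseq : ∀ᶠ n : ℕ in atTop, t * (n * P) < φ (n * P) := by
    filter_upwards [eventually_lt_of_lt_liminf ht, eventually_ge_atTop 1] with n hn hn1
    have hnP : 0 < (n : ℝ) * P := by positivity
    exact (lt_div_iff₀ hnP).mp (EReal.coe_lt_coe_iff.mp hn)
  -- with `n = ⌊s / P⌋₊`: `φ s ≥ φ (n P) > t n P ≥ t s - |t| P > t' s` once `s > |t| P / (t - t')`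
  filter_upwards [hfloor.eventually hseq, eventually_gt_atTop (|t| * P / (t - t'))]
    with s hφn hst
  set n := ⌊s / P⌋₊
  have hs0 : 0 < s := lt_of_le_of_lt (div_nonneg (by positivity) (by linarith)) hst
  have hnP_le : n * P ≤ s := (le_div_iff₀ hP).mp (Nat.floor_le (by positivity))
  have hs_lt : s - n * P < P := by
    have := (div_lt_iff₀ hP).mp (Nat.lt_floor_add_one (s / P))
    linarith
  have hφ_le : φ (n * P) ≤ φ s := hφ (by positivity : (0 : ℝ) ≤ n * P) hs0.le hnP_le
  have hgap : t * (s - n * P) ≤ |t| * P :=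
    mul_le_mul (le_abs_self t) hs_lt.le (by linarith) (abs_nonneg t)
  have hst' : |t| * P < (t - t') * s := (div_lt_iff₀' (by linarith)).mp hst
  exact EReal.coe_le_coe_iff.mpr ((le_div_iff₀ hs0).mpr (by linarith))

theorem liminf_div_eta_eq (g : ℝ → ℝ) :
    liminf (fun x : ℝ => ((g x / eta x : ℝ) : EReal)) (𝓝[Ioo 0 1] 0)
      = liminf (fun s => ((g (exp (-s)) / exp (-s) / s : ℝ) : EReal)) atTop := by
  have hmap : map (fun s => exp (-s)) atTop = 𝓝[Ioo 0 1] (0 : ℝ) := by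
    have hneg : map Neg.neg atTop = (atBot : Filter ℝ) :=
      map_eq_of_inverse (φ := Neg.neg) Neg.neg (funext neg_neg) tendsto_neg_atTop_atBot
        tendsto_neg_atBot_atTop
    rw [nhdsWithin_Ioo_eq_nhdsGT one_pos, ← map_exp_atBot, ← hneg, map_map]
    rfl
  rw [← hmap, ← liminf_comp]
  congr 1
  ext s
  simp [eta, div_div]

theorem liminf_bernoulli_g_entropy_general (g : ℝ → ℝ)
    (hconc : ConcaveOn ℝ (Set.Icc 0 1) g) (h0 : g 0 = 0)
    (k : ℕ) (hk : 2 ≤ k) :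
    (∀ C : ℝ,
      Filter.liminf (fun x : ℝ => ((g x / eta x : ℝ) : EReal))
          (nhdsWithin 0 (Set.Ioo 0 1)) = (C : EReal) →
      Filter.liminf
          (fun n : ℕ => (((1/(n:ℝ)) * ((k:ℝ)^n * g (((k:ℝ)^n)⁻¹)) : ℝ) : EReal))
          Filter.atTop = ((C * Real.log k : ℝ) : EReal)) ∧
    (Filter.liminf (fun x : ℝ => ((g x / eta x : ℝ) : EReal))
          (nhdsWithin 0 (Set.Ioo 0 1)) = ⊤ →
      Filter.liminf
          (fun n : ℕ => (((1/(n:ℝ)) * ((k:ℝ)^n * g (((k:ℝ)^n)⁻¹)) : ℝ) : EReal))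
          Filter.atTop = ⊤) := by
  set P := Real.log k
  have hP : 0 < P := Real.log_pos (by exact_mod_cast hk)
  set φ := fun s => g (exp (-s)) / exp (-s)
  have hφ : MonotoneOn φ (Ici 0) := hconc.monotoneOn_div_exp_neg h0
  have hterm : ∀ n : ℕ, 1 ≤ n →
      (1 / (n : ℝ)) * ((k : ℝ) ^ n * g (((k : ℝ) ^ n)⁻¹)) = P * (φ (n * P) / (n * P)) := by
    intro n hn
    have hn0 : (0 : ℝ) < n := by exact_mod_cast hn
    have hexpP : exp P = k := exp_log (by positivity)
    simp only [φ, exp_neg, exp_nat_mul, hexpP]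
    field_simp
  have hseq : liminf (fun n : ℕ => (((1/(n:ℝ)) * ((k:ℝ)^n * g (((k:ℝ)^n)⁻¹)) : ℝ) : EReal)) atTop
      = (P : EReal) * liminf (fun s => ((φ s / s : ℝ) : EReal)) atTop := by
    rw [← hφ.liminf_div_self_nat_mul hP, ← EReal.liminf_const_mul_of_nonneg_of_ne_top
      (EReal.coe_nonneg.mpr hP.le) (EReal.coe_ne_top P)]
    refine liminf_congr ((eventually_ge_atTop 1).mono fun n hn => ?_)
    rw [hterm n hn, EReal.coe_mul]
  rw [liminf_div_eta_eq]
  refine ⟨fun C hC => ?_, fun htop => ?_⟩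
  · rw [hseq, hC, ← EReal.coe_mul, mul_comm]
  · rw [hseq, htop, EReal.coe_mul_top_of_pos hP]

theorem liminf_bernoulli_g_entropy (g : ℝ → ℝ)
    (hconc : ConcaveOn ℝ (Set.Icc 0 1) g) (h0 : g 0 = 0)
    (hlim : Filter.Tendsto g (nhdsWithin 0 (Set.Ioi 0)) (nhds 0))
    (k : ℕ) (hk : 2 ≤ k) :
    (∀ C : ℝ,
      Filter.liminf (fun x : ℝ => ((g x / eta x : ℝ) : EReal))
          (nhdsWithin 0 (Set.Ioo 0 1)) = (C : EReal) →
      Filter.liminf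
          (fun n : ℕ => (((1/(n:ℝ)) * ((k:ℝ)^n * g (((k:ℝ)^n)⁻¹)) : ℝ) : EReal))
          Filter.atTop = ((C * Real.log k : ℝ) : EReal)) ∧
    (Filter.liminf (fun x : ℝ => ((g x / eta x : ℝ) : EReal))
          (nhdsWithin 0 (Set.Ioo 0 1)) = ⊤ →
      Filter.liminf
          (fun n : ℕ => (((1/(n:ℝ)) * ((k:ℝ)^n * g (((k:ℝ)^n)⁻¹)) : ℝ) : EReal))
          Filter.atTop = ⊤) :=
  liminf_bernoulli_g_entropy_general g hconc h0 k hk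
end

section
/- For every sequence of real numbers (aₙ) with aₙ → ∞ and every γ > 0, there exists a sequence of positive integers (rₙ) such that limsup_{n→∞} 2^{n+1} aₙ / (2r₀ + 2²r₀r₁ + … + 2ⁿ r₀⋯r_{n-1}) = γ. -/
/-!
Put `r = 1` except at checkpoints `0 = m₀ < m₁ < ⋯`. Write `D n` for the denominator and
`Q = r₀ ⋯ r_m`. For `m < n ≤ N`, where `m` and `N` are consecutive checkpoints,
`D n ≥ Q (2^(n+1) - 2^(m+1))`, so the quotient at `n` is at most `c(m, n) / Q`, where
`c(m, n) = 2^(n+1) a n / (2^(n+1) - 2^(m+1)) ≥ a n` is `flatRatio a m n`.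
Taking for `N` a record of `c(m, ·)` and `r_m` minimal with `γ Q ≥ c(m, N)` keeps the quotient
`≤ γ` on the whole stretch. At `N` itself the denominator exceeds `Q (2^(N+1) - 2^(m+1))` only by
terms of size `2^(m+1) r₀ ⋯ r_(m-1)`, negligible once `c(m, N)` is large, so there the quotient is
close to `γ`.
-/

open Filter Finset Topology

theorem Filter.limsup_eq_of_eventually_le_of_tendsto_comp {α ι κ : Type*} [CompleteLinearOrder α]
    [TopologicalSpace α] [OrderTopology α] {f : Filter ι} {g : Filter κ} [g.NeBot] {u : ι → α}
    {φ : κ → ι} {b : α} (hle : ∀ᶠ i in f, u i ≤ b) (hφ : Tendsto φ g f)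
    (hlim : Tendsto (u ∘ φ) g (𝓝 b)) : limsup u f = b := by
  refine le_antisymm (limsup_le_of_le (by isBoundedDefault) hle) ?_
  calc b = limsup (u ∘ φ) g := hlim.limsup_eq.symm
    _ = limsup u (map φ g) := limsup_comp u φ g
    _ ≤ limsup u f := limsup_le_limsup_of_le hφ

theorem Filter.Tendsto.exists_isMaxOn_Ioc {β : Type*} [LinearOrder β] {f : ℕ → β}
    (hf : Tendsto f atTop atTop) (m : ℕ) (b : β) :
    ∃ N, m < N ∧ b ≤ f N ∧ IsMaxOn f (Set.Ioc m N) N := by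
  obtain ⟨N₀, hbN₀, hmN₀⟩ := ((hf.eventually_ge_atTop b).and (eventually_gt_atTop m)).exists
  obtain ⟨N, hN, hmax⟩ := (Finset.Ioc m N₀).exists_max_image f ⟨N₀, by simp [hmN₀]⟩
  rw [Finset.mem_Ioc] at hN
  exact ⟨N, hN.1, hbN₀.trans (hmax N₀ (by simp [hmN₀])),
    fun n hn => hmax n (by simp only [Finset.mem_Ioc]; exact ⟨hn.1, hn.2.trans hN.2⟩)⟩

theorem le_ceil_div_mul_and_lt {K : Type*} [Field K] [LinearOrder K] [IsStrictOrderedRing K]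
    [FloorSemiring K] {x y : K} (hx : 0 ≤ x) (hy : 0 < y) :
    x ≤ ⌈x / y⌉₊ * y ∧ ⌈x / y⌉₊ * y < x + y := by
  constructor
  · rw [← div_le_iff₀ hy]; exact Nat.le_ceil _
  · rw [← lt_div_iff₀ hy, add_div, div_self hy.ne']
    exact Nat.ceil_lt_add_one (div_nonneg hx hy.le)

noncomputable def prefixProd (r : ℕ → ℕ) (n : ℕ) : ℝ := ∏ i ∈ range n, (r i : ℝ)

noncomputable def weightedSum (r : ℕ → ℕ) (n : ℕ) : ℝ :=
  ∑ j ∈ range n, 2 ^ (j + 1) * prefixProd r (j + 1)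

section WeightedSum

variable {r : ℕ → ℕ}

theorem prefixProd_succ (r : ℕ → ℕ) (n : ℕ) : prefixProd r (n + 1) = prefixProd r n * r n :=
  prod_range_succ _ _

theorem prefixProd_nonneg (r : ℕ → ℕ) (n : ℕ) : 0 ≤ prefixProd r n :=
  prod_nonneg fun _ _ => Nat.cast_nonneg _

theorem prefixProd_pos (hr : ∀ i, 0 < r i) (n : ℕ) : 0 < prefixProd r n :=
  prod_pos fun i _ => Nat.cast_pos.2 (hr i)

theorem prefixProd_mono (hr : ∀ i, 0 < r i) : Monotone (prefixProd r) :=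
  monotone_nat_of_le_succ fun n => by
    rw [prefixProd_succ]
    exact le_mul_of_one_le_right (prefixProd_nonneg r n) (Nat.one_le_cast.2 (hr n))

theorem prefixProd_eq_of_eq_one {m n : ℕ} (hmn : m < n) (h : ∀ i, m < i → i < n → r i = 1) :
    prefixProd r n = prefixProd r (m + 1) := by
  rw [prefixProd, ← prod_range_mul_prod_Ico _ hmn, prod_eq_one (s := Ico (m + 1) n), mul_one,
    prefixProd]
  intro i hi
  rw [Finset.mem_Ico] at hi
  simp [h i hi.1 hi.2]

theorem weightedSum_zero (r : ℕ → ℕ) : weightedSum r 0 = 0 := sum_range_zero _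

theorem weightedSum_succ (r : ℕ → ℕ) (n : ℕ) :
    weightedSum r (n + 1) = weightedSum r n + 2 ^ (n + 1) * prefixProd r (n + 1) :=
  sum_range_succ _ _

theorem weightedSum_nonneg (r : ℕ → ℕ) (n : ℕ) : 0 ≤ weightedSum r n :=
  sum_nonneg fun j _ => mul_nonneg (by positivity) (prefixProd_nonneg r _)

theorem weightedSum_pos (hr : ∀ i, 0 < r i) {n : ℕ} (hn : 0 < n) : 0 < weightedSum r n :=
  sum_pos (fun j _ => mul_pos (by positivity) (prefixProd_pos hr _)) ⟨0, by simp [hn]⟩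

theorem two_pow_succ_le_two_pow_succ {m n : ℕ} (h : m ≤ n) : (2 : ℝ) ^ (m + 1) ≤ 2 ^ (n + 1) :=
  pow_le_pow_right₀ one_le_two (by omega)

theorem weightedSum_le (hr : ∀ i, 0 < r i) {m n : ℕ} (hmn : m ≤ n) :
    weightedSum r n ≤ weightedSum r m + prefixProd r n * (2 ^ (n + 1) - 2 ^ (m + 1)) := by
  induction n, hmn using Nat.le_induction with
  | base => simp
  | succ n hmn ih =>
    have hE : (0 : ℝ) ≤ 2 ^ (n + 1) - 2 ^ (m + 1) :=
      sub_nonneg.2 (two_pow_succ_le_two_pow_succ hmn)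
    have hQ := prefixProd_mono hr n.le_succ
    rw [weightedSum_succ]
    calc weightedSum r n + 2 ^ (n + 1) * prefixProd r (n + 1)
        ≤ weightedSum r m + prefixProd r (n + 1) * (2 ^ (n + 1) - 2 ^ (m + 1))
          + 2 ^ (n + 1) * prefixProd r (n + 1) := by
          gcongr
          exact ih.trans (by gcongr)
      _ = weightedSum r m + prefixProd r (n + 1) * (2 ^ (n + 1 + 1) - 2 ^ (m + 1)) := by ring

theorem le_weightedSum (hr : ∀ i, 0 < r i) {m n : ℕ} (hmn : m ≤ n) :
    weightedSum r m + prefixProd r (m + 1) * (2 ^ (n + 1) - 2 ^ (m + 1)) ≤ weightedSum r n := by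
  induction n, hmn using Nat.le_induction with
  | base => simp
  | succ n hmn ih =>
    have hQ := prefixProd_mono hr (show m + 1 ≤ n + 1 by omega)
    rw [weightedSum_succ]
    calc weightedSum r m + prefixProd r (m + 1) * (2 ^ (n + 1 + 1) - 2 ^ (m + 1))
        = weightedSum r m + prefixProd r (m + 1) * (2 ^ (n + 1) - 2 ^ (m + 1))
          + 2 ^ (n + 1) * prefixProd r (m + 1) := by ring
      _ ≤ weightedSum r n + 2 ^ (n + 1) * prefixProd r (n + 1) := by gcongr

theorem weightedSum_le_two_pow_mul (hr : ∀ i, 0 < r i) (m : ℕ) :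
    weightedSum r m ≤ 2 ^ (m + 1) * prefixProd r m := by
  calc weightedSum r m ≤ weightedSum r 0 + prefixProd r m * (2 ^ (m + 1) - 2 ^ (0 + 1)) :=
        weightedSum_le hr m.zero_le
    _ ≤ 2 ^ (m + 1) * prefixProd r m := by
        rw [weightedSum_zero, zero_add, mul_comm]
        exact mul_le_mul_of_nonneg_right (sub_le_self _ (by positivity)) (prefixProd_nonneg r m)

end WeightedSum

/-- The value of `ratio a r n` when `weightedSum r m = 0`, `prefixProd r (m + 1) = 1` and `r = 1`
on `(m, n)`. -/
noncomputable def flatRatio (a : ℕ → ℝ) (m n : ℕ) : ℝ :=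
  2 ^ (n + 1) * a n / (2 ^ (n + 1) - 2 ^ (m + 1))

noncomputable def ratio (a : ℕ → ℝ) (r : ℕ → ℕ) (n : ℕ) : ℝ := 2 ^ (n + 1) * a n / weightedSum r n

section Stage

variable {a : ℕ → ℝ} {r : ℕ → ℕ} {m n : ℕ}

theorem two_pow_sub_two_pow_pos (h : m < n) : (0 : ℝ) < 2 ^ (n + 1) - 2 ^ (m + 1) :=
  sub_pos.2 (pow_lt_pow_right₀ one_lt_two (by omega))

theorem flatRatio_mul (h : m < n) :
    flatRatio a m n * (2 ^ (n + 1) - 2 ^ (m + 1)) = 2 ^ (n + 1) * a n :=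
  div_mul_cancel₀ _ (two_pow_sub_two_pow_pos h).ne'

theorem le_flatRatio (h : m < n) (ha : 0 ≤ a n) : a n ≤ flatRatio a m n := by
  rw [flatRatio, le_div_iff₀ (two_pow_sub_two_pow_pos h)]
  nlinarith [pow_pos (two_pos (α := ℝ)) (m + 1)]

theorem tendsto_flatRatio (ha : Tendsto a atTop atTop) (m : ℕ) :
    Tendsto (flatRatio a m) atTop atTop :=
  tendsto_atTop_mono' _ (((ha.eventually_ge_atTop 0).and (eventually_gt_atTop m)).mono
    fun _ h => le_flatRatio h.2 h.1) ha

theorem ratio_le_of_flatRatio_le (hr : ∀ i, 0 < r i) {γ : ℝ} (hγ : 0 ≤ γ) (hmn : m < n)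
    (h : flatRatio a m n ≤ γ * prefixProd r (m + 1)) : ratio a r n ≤ γ := by
  have hE := two_pow_sub_two_pow_pos hmn
  rw [ratio, div_le_iff₀ (weightedSum_pos hr (by omega)), ← flatRatio_mul hmn]
  calc flatRatio a m n * (2 ^ (n + 1) - 2 ^ (m + 1))
      ≤ γ * (prefixProd r (m + 1) * (2 ^ (n + 1) - 2 ^ (m + 1))) := by
        rw [← mul_assoc]; exact mul_le_mul_of_nonneg_right h hE.le
    _ ≤ γ * weightedSum r n := by
        gcongr
        linarith [le_weightedSum hr hmn.le, weightedSum_nonneg r m]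

theorem div_one_add_le_ratio (hr : ∀ i, 0 < r i) {γ ε : ℝ} (hγ : 0 < γ) (hε : 0 ≤ ε) (hmn : m < n)
    (hone : ∀ i, m < i → i < n → r i = 1)
    (hQ : γ * prefixProd r (m + 1) ≤ flatRatio a m n + γ * prefixProd r m)
    (hbig : 2 * γ * prefixProd r m ≤ ε * flatRatio a m n) :
    γ / (1 + ε) ≤ ratio a r n := by
  set E : ℝ := 2 ^ (n + 1) - 2 ^ (m + 1)
  have hE : 2 ^ (m + 1) ≤ E := by
    have := two_pow_succ_le_two_pow_succ (show m + 1 ≤ n by omega)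
    rw [pow_succ 2 (m + 1)] at this
    linarith
  have hE₀ : 0 < E := two_pow_sub_two_pow_pos hmn
  have hD : γ * weightedSum r n ≤ (1 + ε) * (flatRatio a m n * E) := by
    have hsum := weightedSum_le hr hmn.le
    rw [prefixProd_eq_of_eq_one hmn hone] at hsum
    have hQm : weightedSum r m ≤ E * prefixProd r m :=
      (weightedSum_le_two_pow_mul hr m).trans (by gcongr; exact prefixProd_nonneg r m)
    calc γ * weightedSum r n ≤ (γ * prefixProd r m + γ * prefixProd r (m + 1)) * E := by
          nlinarith
      _ ≤ (flatRatio a m n + ε * flatRatio a m n) * E := by gcongr ?_ * E; linarith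
      _ = (1 + ε) * (flatRatio a m n * E) := by ring
  rw [ratio, le_div_iff₀ (weightedSum_pos hr (by omega)), ← flatRatio_mul hmn,
    div_mul_eq_mul_div, div_le_iff₀ (by linarith)]
  linarith

end Stage

section Construction

variable (a : ℕ → ℝ) (γ : ℝ)

noncomputable def nextCheckpoint (m : ℕ) (b : ℝ) : ℕ :=
  Classical.epsilon fun N => m < N ∧ b ≤ flatRatio a m N ∧ IsMaxOn (flatRatio a m) (Set.Ioc m N) N

/-- The `k`-th checkpoint `m k` together with `∏ i < m k, r i`. -/
noncomputable def schedule : ℕ → ℕ × ℕ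
  | 0 => (0, 1)
  | k + 1 =>
    let m := (schedule k).1
    let P := (schedule k).2
    let N := nextCheckpoint a m (2 * (k + 1) * γ * P)
    (N, P * ⌈flatRatio a m N / (γ * P)⌉₊)

noncomputable def checkpoint (k : ℕ) : ℕ := (schedule a γ k).1

noncomputable def multiplier (k : ℕ) : ℕ :=
  ⌈flatRatio a (checkpoint a γ k) (checkpoint a γ (k + 1)) / (γ * (schedule a γ k).2)⌉₊

noncomputable def multiplierSeq : ℕ → ℕ := Function.extend (checkpoint a γ) (multiplier a γ) 1

variable {a γ}

theorem checkpoint_succ_spec (ha : Tendsto a atTop atTop) (k : ℕ) :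
    checkpoint a γ k < checkpoint a γ (k + 1) ∧
      2 * (k + 1) * γ * (schedule a γ k).2 ≤
        flatRatio a (checkpoint a γ k) (checkpoint a γ (k + 1)) ∧
      IsMaxOn (flatRatio a (checkpoint a γ k)) (Set.Ioc (checkpoint a γ k) (checkpoint a γ (k + 1)))
        (checkpoint a γ (k + 1)) :=
  Classical.epsilon_spec ((tendsto_flatRatio ha _).exists_isMaxOn_Ioc _ _)

theorem strictMono_checkpoint (ha : Tendsto a atTop atTop) : StrictMono (checkpoint a γ) :=
  strictMono_nat_of_lt_succ fun k => (checkpoint_succ_spec ha k).1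

theorem schedule_succ_snd (k : ℕ) :
    (schedule a γ (k + 1)).2 = (schedule a γ k).2 * multiplier a γ k := rfl

theorem multiplier_pos (ha : Tendsto a atTop atTop) (hγ : 0 < γ) {k : ℕ}
    (hP : 0 < (schedule a γ k).2) : 0 < multiplier a γ k := by
  have hbig : (0 : ℝ) < 2 * (k + 1) * γ * (schedule a γ k).2 := by positivity
  exact Nat.ceil_pos.2 <| div_pos (hbig.trans_le (checkpoint_succ_spec ha k).2.1) (by positivity)

theorem schedule_snd_pos (ha : Tendsto a atTop atTop) (hγ : 0 < γ) (k : ℕ) :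
    0 < (schedule a γ k).2 := by
  induction k with
  | zero => exact one_pos
  | succ k ih => rw [schedule_succ_snd]; exact Nat.mul_pos ih (multiplier_pos ha hγ ih)

theorem multiplierSeq_checkpoint (ha : Tendsto a atTop atTop) (k : ℕ) :
    multiplierSeq a γ (checkpoint a γ k) = multiplier a γ k :=
  (strictMono_checkpoint ha).injective.extend_apply _ _ _

theorem multiplierSeq_eq_one (ha : Tendsto a atTop atTop) {k i : ℕ} (h₁ : checkpoint a γ k < i)
    (h₂ : i < checkpoint a γ (k + 1)) : multiplierSeq a γ i = 1 := by
  refine Function.extend_apply' _ _ _ ?_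
  rintro ⟨j, rfl⟩
  rw [(strictMono_checkpoint (γ := γ) ha).lt_iff_lt] at h₁ h₂
  omega

theorem multiplierSeq_pos (ha : Tendsto a atTop atTop) (hγ : 0 < γ) (i : ℕ) :
    0 < multiplierSeq a γ i := by
  by_cases h : ∃ k, checkpoint a γ k = i
  · obtain ⟨k, rfl⟩ := h
    rw [multiplierSeq_checkpoint ha]
    exact multiplier_pos ha hγ (schedule_snd_pos ha hγ k)
  · rw [multiplierSeq, Function.extend_apply' _ _ _ h]
    exact one_pos

theorem prefixProd_multiplierSeq_checkpoint (ha : Tendsto a atTop atTop) (k : ℕ) :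
    prefixProd (multiplierSeq a γ) (checkpoint a γ k) = (schedule a γ k).2 := by
  induction k with
  | zero => simp [checkpoint, schedule, prefixProd]
  | succ k ih =>
    rw [prefixProd_eq_of_eq_one ((checkpoint_succ_spec ha k).1) fun i => multiplierSeq_eq_one ha,
      prefixProd_succ, ih, multiplierSeq_checkpoint ha, schedule_succ_snd, Nat.cast_mul]

theorem flatRatio_le_mul_prefixProd_and_le (ha : Tendsto a atTop atTop) (hγ : 0 < γ) (k : ℕ) :
    flatRatio a (checkpoint a γ k) (checkpoint a γ (k + 1)) ≤
        γ * prefixProd (multiplierSeq a γ) (checkpoint a γ k + 1) ∧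
      γ * prefixProd (multiplierSeq a γ) (checkpoint a γ k + 1) ≤
        flatRatio a (checkpoint a γ k) (checkpoint a γ (k + 1)) +
          γ * prefixProd (multiplierSeq a γ) (checkpoint a γ k) := by
  have hP : (0 : ℝ) < γ * (schedule a γ k).2 :=
    mul_pos hγ (Nat.cast_pos.2 (schedule_snd_pos ha hγ k))
  have hbig : (0 : ℝ) ≤ 2 * (k + 1) * γ * (schedule a γ k).2 := by positivity
  have hf := le_ceil_div_mul_and_lt (hbig.trans (checkpoint_succ_spec ha k).2.1) hP
  have hQ : γ * prefixProd (multiplierSeq a γ) (checkpoint a γ k + 1) =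
      multiplier a γ k * (γ * (schedule a γ k).2) := by
    rw [prefixProd_succ, prefixProd_multiplierSeq_checkpoint ha, multiplierSeq_checkpoint ha]
    ring
  rw [hQ, prefixProd_multiplierSeq_checkpoint ha]
  exact ⟨hf.1, hf.2.le⟩

end Construction

section Bounds

variable {a : ℕ → ℝ} {γ : ℝ}

theorem ratio_multiplierSeq_le (ha : Tendsto a atTop atTop) (hγ : 0 < γ) {n : ℕ} (hn : 0 < n) :
    ratio a (multiplierSeq a γ) n ≤ γ := by
  have hmono := strictMono_checkpoint (γ := γ) ha
  obtain ⟨k, hk, hnk⟩ := hmono.exists_between_of_tendsto_atTop hmono.tendsto_atTop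
    (show checkpoint a γ 0 < n from hn)
  refine ratio_le_of_flatRatio_le (multiplierSeq_pos ha hγ) hγ.le hk ?_
  exact ((checkpoint_succ_spec ha k).2.2 ⟨hk, hnk⟩).trans
    (flatRatio_le_mul_prefixProd_and_le ha hγ k).1

theorem div_le_ratio_multiplierSeq_checkpoint (ha : Tendsto a atTop atTop) (hγ : 0 < γ) (k : ℕ) :
    γ / (1 + 1 / (k + 1)) ≤ ratio a (multiplierSeq a γ) (checkpoint a γ (k + 1)) := by
  obtain ⟨hlt, hbig, -⟩ := checkpoint_succ_spec ha k
  refine div_one_add_le_ratio (multiplierSeq_pos ha hγ) hγ (by positivity) hlt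
    (fun i => multiplierSeq_eq_one ha) (flatRatio_le_mul_prefixProd_and_le ha hγ k).2 ?_
  rw [prefixProd_multiplierSeq_checkpoint ha, div_mul_eq_mul_div, one_mul,
    le_div_iff₀ (by positivity)]
  linarith

end Bounds

theorem exists_r_limsup_eq (a : ℕ → ℝ)
    (ha : Filter.Tendsto a Filter.atTop Filter.atTop)
    (γ : ℝ) (hγ : 0 < γ) :
    ∃ r : ℕ → ℕ, (∀ n, 0 < r n) ∧
      Filter.limsup
        (fun n : ℕ =>
          (((2:ℝ)^(n+1) * a n /
            ∑ j ∈ Finset.range n,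
              (2:ℝ)^(j+1) * ∏ i ∈ Finset.range (j+1), (r i : ℝ) : ℝ) : EReal))
        Filter.atTop = (γ : EReal) := by
  refine ⟨multiplierSeq a γ, multiplierSeq_pos ha hγ, ?_⟩
  change limsup (fun n => (ratio a (multiplierSeq a γ) n : EReal)) atTop = γ
  have hlower : Tendsto (fun k : ℕ => γ / (1 + 1 / ((k : ℝ) + 1))) atTop (𝓝 γ) := by
    have h := (tendsto_const_nhds (x := (1 : ℝ))).add tendsto_one_div_add_atTop_nhds_zero_nat
    have h' : Tendsto (fun k : ℕ => γ / (1 + 1 / ((k : ℝ) + 1))) atTop (𝓝 (γ / (1 + 0))) :=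
      tendsto_const_nhds.div h (by norm_num)
    rwa [add_zero, div_one] at h'
  refine limsup_eq_of_eventually_le_of_tendsto_comp (φ := fun k => checkpoint a γ (k + 1)) ?_
    ((strictMono_checkpoint ha).tendsto_atTop.comp (tendsto_add_atTop_nat 1)) ?_
  · filter_upwards [eventually_gt_atTop 0] with n hn
    exact EReal.coe_le_coe_iff.2 (ratio_multiplierSeq_le ha hγ hn)
  · refine EReal.tendsto_coe.2 (tendsto_of_tendsto_of_tendsto_of_le_of_le hlower tendsto_const_nhds
      (div_le_ratio_multiplierSeq_checkpoint ha hγ) fun k => ratio_multiplierSeq_le ha hγ ?_)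
    exact (Nat.zero_le _).trans_lt ((strictMono_checkpoint ha) k.lt_succ_self)
end

section
/- Let g : [0,1] → ℝ be concave with g(0) = 0, differentiable (with left derivative at 1/2 denoted g'_-(1/2)). Let 𝒫 be a finite partition of a probability space (X,Σ,μ) and F ∈ Σ. Then Σ_{A∈𝒫} g(μ(A)) ≥ Σ_{A∈𝒫} g(μ(A ∩ F)) − |g'_-(1/2)| − d_max, where d_max = max_{x,y∈[0,1]} |g(x) − g(y)|. -/
open MeasureTheory

lemma key_slope (g : ℝ → ℝ) (hconc : ConcaveOn ℝ (Set.Icc 0 1) g)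
    (d : ℝ) (hd : HasDerivWithinAt g d (Set.Iic (1/2)) (1/2))
    {s t : ℝ} (hs : 0 ≤ s) (hst : s ≤ t) (ht : t ≤ 1/2) :
    g s - g t ≤ |d| * (t - s) := by
  rcases eq_or_lt_of_le hst with rfl | hlt
  · simp
  have hs1 : s ∈ Set.Icc (0:ℝ) 1 := ⟨hs, by linarith⟩
  have ht1 : t ∈ Set.Icc (0:ℝ) 1 := ⟨by linarith, by linarith⟩
  have hhalf : (1/2 : ℝ) ∈ Set.Icc (0:ℝ) 1 := by norm_num
  have hslope : d ≤ slope g s t := by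
    rcases eq_or_lt_of_le ht with rfl | hlt2
    · exact hconc.le_slope_of_hasDerivWithinAt_Iio hs1 ht1 hlt
        (hd.mono Set.Iio_subset_Iic_self)
    · have h1 : d ≤ slope g s (1/2) :=
        hconc.le_slope_of_hasDerivWithinAt_Iio hs1 hhalf (by linarith)
          (hd.mono Set.Iio_subset_Iic_self)
      have h2 : slope g s (1/2) ≤ slope g s t :=
        hconc.slope_anti hs1 ⟨ht1, by simp [ne_of_gt hlt]⟩
          ⟨hhalf, by simp; intro h; linarith⟩ ht
      linarith
  have h3 : d * (t - s) ≤ slope g s t * (t - s) :=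
    mul_le_mul_of_nonneg_right hslope (by linarith)
  have h4 : slope g s t * (t - s) = g t - g s := by
    rw [slope_def_field, div_mul_cancel₀ _ (sub_ne_zero.2 (ne_of_gt hlt))]
  have h5 : -d ≤ |d| := neg_le_abs d
  nlinarith [abs_nonneg d]

theorem g_entropy_ge_restricted (X : Type*) [MeasurableSpace X]
    (μ : Measure X) [IsProbabilityMeasure μ]
    (g : ℝ → ℝ) (hconc : ConcaveOn ℝ (Set.Icc 0 1) g) (h0 : g 0 = 0)
    (d : ℝ) (hd : HasDerivWithinAt g d (Set.Iic (1/2)) (1/2))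
    (D : ℝ)
    (hD : IsGreatest
      {v | ∃ x ∈ Set.Icc (0:ℝ) 1, ∃ y ∈ Set.Icc (0:ℝ) 1, |g x - g y| = v} D)
    (P : Finset (Set X)) (hmeas : ∀ A ∈ P, MeasurableSet A)
    (hdisj : (P : Set (Set X)).PairwiseDisjoint id)
    (hcover : ⋃₀ (P : Set (Set X)) = Set.univ)
    (E : Set X) (hE : E ∈ P) (hE0 : 0 < μ E) (hE1 : μ E < 1)
    (F : Set X) (hF : MeasurableSet F) :
    (∑ A ∈ P, g (μ A).toReal) ≥ (∑ A ∈ P, g (μ (A ∩ F)).toReal) - |d| - D := by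
  classical
  -- notation
  set t : Set X → ℝ := fun A => (μ A).toReal with ht_def
  set s : Set X → ℝ := fun A => (μ (A ∩ F)).toReal with hs_def
  have hD0 : 0 ≤ D := by
    obtain ⟨x, hx, y, hy, hxy⟩ := hD.1
    rw [← hxy]; exact abs_nonneg _
  have hs_nonneg : ∀ A, 0 ≤ s A := fun A => ENNReal.toReal_nonneg
  have hst : ∀ A, s A ≤ t A := by
    intro A
    exact ENNReal.toReal_mono (measure_ne_top μ A)
      (measure_mono Set.inter_subset_left)
  have ht1 : ∀ A, t A ≤ 1 := by
    intro A
    have : μ A ≤ 1 := prob_le_one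
    simpa [ht_def] using ENNReal.toReal_mono (by norm_num) this
  have hsmem : ∀ A, s A ∈ Set.Icc (0:ℝ) 1 :=
    fun A => ⟨hs_nonneg A, (hst A).trans (ht1 A)⟩
  have htmem : ∀ A, t A ∈ Set.Icc (0:ℝ) 1 :=
    fun A => ⟨ENNReal.toReal_nonneg, ht1 A⟩
  -- total measure
  have hsum_ennreal : ∑ A ∈ P, μ A = 1 := by
    have h1 : μ (⋃ A ∈ P, A) = ∑ A ∈ P, μ A :=
      measure_biUnion_finset hdisj hmeas
    have h2 : (⋃ A ∈ P, A) = ⋃₀ ((P : Set (Set X))) := by ext x; simp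
    rw [h2, hcover] at h1
    simpa using h1.symm
  have hsum : ∑ A ∈ P, t A = 1 := by
    rw [ht_def, ← ENNReal.toReal_sum (fun A _ => measure_ne_top μ A),
      hsum_ennreal, ENNReal.toReal_one]
  have hsum_ts : ∑ A ∈ P, (t A - s A) ≤ 1 := by
    rw [Finset.sum_sub_distrib, hsum]
    have : 0 ≤ ∑ A ∈ P, s A := Finset.sum_nonneg fun A _ => hs_nonneg A
    linarith
  -- goal reduces to a sum bound
  suffices h : ∑ A ∈ P, (g (s A) - g (t A)) ≤ |d| + D by
    rw [Finset.sum_sub_distrib] at h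
    linarith
  by_cases hbig : ∃ A ∈ P, 1/2 < t A
  · obtain ⟨A₀, hA₀, hA₀big⟩ := hbig
    have hterm : g (s A₀) - g (t A₀) ≤ D := by
      calc g (s A₀) - g (t A₀) ≤ |g (s A₀) - g (t A₀)| := le_abs_self _
        _ ≤ D := hD.2 ⟨s A₀, hsmem A₀, t A₀, htmem A₀, rfl⟩
    have hsmall : ∀ A ∈ P.erase A₀, t A ≤ 1/2 := by
      intro A hA
      have hAP := Finset.mem_of_mem_erase hA
      have hne : A ≠ A₀ := Finset.ne_of_mem_erase hA
      have hdisjA : Disjoint A A₀ := hdisj hAP hA₀ hne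
      have hmu : μ A + μ A₀ ≤ 1 := by
        rw [← measure_union hdisjA (hmeas A₀ hA₀)]
        exact prob_le_one
      have hreal : t A + t A₀ ≤ 1 := by
        have := ENNReal.toReal_mono (by norm_num) hmu
        rwa [ENNReal.toReal_add (measure_ne_top μ A) (measure_ne_top μ A₀),
          ENNReal.toReal_one] at this
      linarith
    rw [← Finset.add_sum_erase P _ hA₀]
    have hrest : ∑ A ∈ P.erase A₀, (g (s A) - g (t A)) ≤ |d| := by
      calc ∑ A ∈ P.erase A₀, (g (s A) - g (t A))
          ≤ ∑ A ∈ P.erase A₀, |d| * (t A - s A) :=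
            Finset.sum_le_sum fun A hA =>
              key_slope g hconc d hd (hs_nonneg A) (hst A) (hsmall A hA)
        _ = |d| * ∑ A ∈ P.erase A₀, (t A - s A) := by rw [Finset.mul_sum]
        _ ≤ |d| * 1 := by
            apply mul_le_mul_of_nonneg_left _ (abs_nonneg d)
            refine le_trans ?_ hsum_ts
            exact Finset.sum_le_sum_of_subset_of_nonneg (Finset.erase_subset _ _)
              (fun A hA _ => by linarith [hst A])
        _ = |d| := mul_one _
    linarith
  · push_neg at hbig
    calc ∑ A ∈ P, (g (s A) - g (t A))
        ≤ ∑ A ∈ P, |d| * (t A - s A) :=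
          Finset.sum_le_sum fun A hA =>
            key_slope g hconc d hd (hs_nonneg A) (hst A) (hbig A hA)
      _ = |d| * ∑ A ∈ P, (t A - s A) := by rw [Finset.mul_sum]
      _ ≤ |d| * 1 := mul_le_mul_of_nonneg_left hsum_ts (abs_nonneg d)
      _ ≤ |d| + D := by linarith [abs_nonneg d]
end

section
/- If g : [0,1] → ℝ is concave with g(0)=0 and η(x) = −x log x, and limsup_{x→0⁺} g(x)/η(x) = ∞, then limsup_{n→∞} (1/n) · 2ⁿ g(2^{-n}) = ∞. -/
open Filter Set Real Topology

theorem EReal.limsup_coe_eq_top_iff {α : Type*} {l : Filter α} {f : α → ℝ} :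
    limsup (fun x => (f x : EReal)) l = ⊤ ↔ ∀ c : ℝ, ∃ᶠ x in l, c < f x := by
  refine ⟨fun h c => ?_, fun h => ?_⟩
  · have := frequently_lt_of_lt_limsup (by isBoundedDefault) (h ▸ EReal.coe_lt_top c)
    exact_mod_cast this
  · refine (EReal.eq_top_iff_forall_lt _).2 fun c => ?_
    refine (EReal.coe_lt_coe_iff.2 (lt_add_one c)).trans_le (le_limsup_of_frequently_le' ?_)
    exact (h (c + 1)).mono fun x hx => EReal.coe_le_coe_iff.2 hx.le

theorem ConcaveOn.div_le_div_of_le_s17 {𝕜 : Type*} [Field 𝕜] [LinearOrder 𝕜] [IsStrictOrderedRing 𝕜]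
    {s : Set 𝕜} {g : 𝕜 → 𝕜} (hg : ConcaveOn 𝕜 s g) (h0s : 0 ∈ s) (h0 : g 0 = 0) {a x : 𝕜}
    (ha : a ∈ s) (hx : x ∈ s) (ha0 : 0 < a) (hax : a ≤ x) : g x / x ≤ g a / a := by
  simpa [slope_def_field, h0] using
    hg.antitoneOn_slope_gt h0s ⟨ha, ha0⟩ ⟨hx, ha0.trans_le hax⟩ hax

theorem eta_eq_mul_neg_log (x : ℝ) : eta x = x * -log x := by
  rw [eta]; ring

theorem eta_pos {x : ℝ} (hx : x ∈ Ioo 0 1) : 0 < eta x := by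
  rw [eta_eq_mul_neg_log]
  exact mul_pos hx.1 (neg_pos.2 (log_neg hx.1 hx.2))

section
variable {g : ℝ → ℝ} {b M x : ℝ} {n : ℕ}

theorem mul_log_le_pow_mul_apply_inv_pow (hg : ConcaveOn ℝ (Icc 0 1) g) (h0 : g 0 = 0)
    (hb : 0 < b) (hx : x ∈ Ioo 0 1) (hM : 0 ≤ M) (hgx : M * eta x ≤ g x)
    (hn : b ^ n ≤ x⁻¹) (hn' : x⁻¹ < b ^ (n + 1)) :
    M * (n * log b) ≤ b ^ (n + 1) * g (b ^ (n + 1))⁻¹ := by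
  have hx0 : 0 < x := hx.1
  have hbn : 0 < b ^ (n + 1) := pow_pos hb _
  have hax : (b ^ (n + 1))⁻¹ ≤ x := (inv_lt_comm₀ hx0 hbn).1 hn' |>.le
  calc M * (n * log b) = M * log (b ^ n) := by rw [log_pow]
    _ ≤ M * -log x := by
      gcongr
      rw [← log_inv]
      exact log_le_log (pow_pos hb _) hn
    _ = M * eta x / x := by rw [eta_eq_mul_neg_log]; field_simp
    _ ≤ g x / x := by gcongr
    _ ≤ g (b ^ (n + 1))⁻¹ / (b ^ (n + 1))⁻¹ :=
      hg.div_le_div_of_le_s17 ⟨le_rfl, zero_le_one⟩ h0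
        ⟨(inv_pos.2 hbn).le, hax.trans hx.2.le⟩ ⟨hx0.le, hx.2.le⟩ (inv_pos.2 hbn) hax
    _ = b ^ (n + 1) * g (b ^ (n + 1))⁻¹ := by rw [div_inv_eq_mul, mul_comm]

theorem frequently_mul_log_div_two_le_of_frequently_lt_div_eta
    (hg : ConcaveOn ℝ (Icc 0 1) g) (h0 : g 0 = 0) (hb : 1 < b) (hM : 0 ≤ M)
    (hfreq : ∃ᶠ x in 𝓝[Ioo 0 1] 0, M < g x / eta x) :
    ∃ᶠ n : ℕ in atTop, M * log b / 2 ≤ 1 / n * (b ^ n * g (b ^ n)⁻¹) := by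
  have hb0 : 0 < b := zero_lt_one.trans hb
  rw [frequently_atTop]
  intro N
  have hsmall : ∀ᶠ x in 𝓝[Ioo 0 1] 0, x ∈ Ioo 0 1 ∧ x < (b ^ (N + 1))⁻¹ :=
    Eventually.and self_mem_nhdsWithin (nhdsWithin_le_nhds (eventually_lt_nhds (by positivity)))
  obtain ⟨x, hMx, hx, hxN⟩ := (hfreq.and_eventually hsmall).exists
  obtain ⟨n, hn, hn'⟩ := exists_nat_pow_near ((one_le_inv₀ hx.1).2 hx.2.le) hb
  have hNn : N + 1 < n + 1 :=
    (pow_lt_pow_iff_right₀ hb).1 (((lt_inv_comm₀ hx.1 (by positivity)).1 hxN).trans hn')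
  have key := mul_log_le_pow_mul_apply_inv_pow hg h0 hb0 hx hM
    ((lt_div_iff₀ (eta_pos hx)).1 hMx).le hn hn'
  refine ⟨n + 1, by omega, ?_⟩
  have hn1 : (1 : ℝ) ≤ n := by exact_mod_cast (by omega : 1 ≤ n)
  rw [one_div, inv_mul_eq_div, le_div_iff₀ (by positivity)]
  push_cast
  nlinarith [mul_nonneg (mul_nonneg hM (log_nonneg hb.le)) (sub_nonneg.2 hn1)]

end

theorem limsup_top_of_ratio_top_general (g : ℝ → ℝ)
    (hconc : ConcaveOn ℝ (Set.Icc 0 1) g) (h0 : g 0 = 0)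
    (hC : Filter.limsup (fun x : ℝ => ((g x / eta x : ℝ) : EReal))
        (nhdsWithin 0 (Set.Ioo 0 1)) = ⊤) :
    Filter.limsup
        (fun n : ℕ => (((1/(n:ℝ)) * ((2:ℝ)^n * g (((2:ℝ)^n)⁻¹)) : ℝ) : EReal))
        Filter.atTop = ⊤ := by
  rw [EReal.limsup_coe_eq_top_iff] at hC ⊢
  intro c
  have hlog2 : 0 < log 2 := log_pos one_lt_two
  obtain ⟨M, hM, hcM⟩ : ∃ M, 0 ≤ M ∧ c < M * log 2 / 2 := by
    refine ⟨2 * (|c| + 1) / log 2, by positivity, ?_⟩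
    rw [div_mul_cancel₀ _ hlog2.ne']
    linarith [le_abs_self c]
  exact (frequently_mul_log_div_two_le_of_frequently_lt_div_eta hconc h0 one_lt_two hM
    (hC M)).mono fun n hn => hcM.trans_le hn

theorem limsup_top_of_ratio_top (g : ℝ → ℝ)
    (hconc : ConcaveOn ℝ (Set.Icc 0 1) g) (h0 : g 0 = 0)
    (hlim : Filter.Tendsto g (nhdsWithin 0 (Set.Ioi 0)) (nhds 0))
    (hC : Filter.limsup (fun x : ℝ => ((g x / eta x : ℝ) : EReal))
        (nhdsWithin 0 (Set.Ioo 0 1)) = ⊤) :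
    Filter.limsup
        (fun n : ℕ => (((1/(n:ℝ)) * ((2:ℝ)^n * g (((2:ℝ)^n)⁻¹)) : ℝ) : EReal))
        Filter.atTop = ⊤ :=
  limsup_top_of_ratio_top_general g hconc h0 hC
end
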